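/- arXiv:1303.7046 — 7 statements merged into one kernel-verified Lean document; each statement's English description precedes it below -/
import Mathlib

section
/- Let P : C̃ → C together with ramification numbers e be a ramified covering of small categories which is finite to one, i.e., every object of C has finitely many preimage objects and every morphism of C has finitely many preimage morphisms. Suppose there exists a composable sequence of non-identity morphisms x̃₀ → x̃₁ → ⋯ → x̃_{n−1} → x̃₀ in C̃ starting and ending at the same object x̃₀. Then e(x̃₀) = 1 (hence e(x̃_i) = 1 for all i). -/
/-!
Count the lifts of a non-identity morphism `φ : c ⟶ c'` in two ways. By target, bijectivity
of `P` on `T(x̃)` gives one lift per object over `c'`; by source, there are `e a` lifts out of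
each `a` over `c`. Hence `|P⁻¹ c'| = ∑_{a ∈ P⁻¹ c} e a ≥ |P⁻¹ c|`. Along a cycle these fiber
cardinalities increase weakly and come back to their start, so all the inequalities are
equalities, which forces `e = 1` over every vertex of the cycle.
-/

open CategoryTheory

universe u

/-- The set of morphisms of `C` with target `x`, encoded as a sigma type. -/
abbrev Tgt (C : Type u) [SmallCategory C] (x : C) : Type u := Σ a : C, a ⟶ x

/-- The set of morphisms of `C` with source `x`, encoded as a sigma type. -/
abbrev Src (C : Type u) [SmallCategory C] (x : C) : Type u := Σ b : C, x ⟶ b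

/-- The map `T(x̃) → T(P x̃)` induced by a functor `P`. -/
def tgtMap {D C : Type u} [SmallCategory D] [SmallCategory C] (P : D ⥤ C) (x : D) :
    Tgt D x → Tgt C (P.obj x) := fun g => ⟨P.obj g.1, P.map g.2⟩

/-- The map `S(x̃) → S(P x̃)` induced by a functor `P`. -/
def srcMap {D C : Type u} [SmallCategory D] [SmallCategory C] (P : D ⥤ C) (x : D) :
    Src D x → Src C (P.obj x) := fun g => ⟨P.obj g.1, P.map g.2⟩

/-- `P : D ⥤ C` together with ramification numbers `e` is a ramified covering:
`C` is connected, `e x ≥ 1` for all `x`, `P : T(x̃) → T(P x̃)` is bijective,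
every morphism of `S̄(P x̃)` has exactly `e x̃` preimages in `S̄(x̃)`, and
`e x̃ = 1` whenever `S̄(P x̃)` is empty. -/
structure IsRamifiedCovering {D C : Type u} [SmallCategory D] [SmallCategory C]
    (P : D ⥤ C) (e : D → ℕ) : Prop where
  nonempty : Nonempty C
  zigzag : ∀ x y : C, Zigzag x y
  one_le : ∀ x : D, 1 ≤ e x
  tgt_bij : ∀ x : D, Function.Bijective (tgtMap P x)
  src_count : ∀ (x : D) (g : Src C (P.obj x)), g ≠ ⟨P.obj x, 𝟙 (P.obj x)⟩ →
    Nat.card {h : Src D x // h ≠ ⟨x, 𝟙 x⟩ ∧ srcMap P x h = g} = e x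
  ram_one : ∀ x : D, (∀ g : Src C (P.obj x), g = ⟨P.obj x, 𝟙 (P.obj x)⟩) → e x = 1

theorem Finset.eq_one_of_sum_le_card {ι : Type*} {s : Finset ι} {f : ι → ℕ}
    (hf : ∀ i ∈ s, 1 ≤ f i) (hsum : ∑ i ∈ s, f i ≤ s.card) : ∀ i ∈ s, f i = 1 := by
  have hcard : ∑ _i ∈ s, 1 = ∑ i ∈ s, f i :=
    le_antisymm (Finset.sum_le_sum hf) (by simpa using hsum)
  exact fun i hi => ((Finset.sum_eq_sum_iff_of_le hf).mp hcard i hi).symm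

theorem Tgt.eq_of_triple_eq {A : Type u} [SmallCategory A] {a a' w : A} {k : a ⟶ w}
    {k' : a' ⟶ w} (h : (⟨a, w, k⟩ : Σ a b : A, a ⟶ b) = ⟨a', w, k'⟩) :
    (⟨a, k⟩ : Tgt A w) = ⟨a', k'⟩ := by
  obtain ⟨rfl, h⟩ := Sigma.mk.inj_iff.mp h
  rw [sigma_mk_injective (eq_of_heq h)]

-- Lifts are taken as triples `⟨a, b, g⟩` so that no transport along `P.obj a = c` is needed.
def Lift {D C : Type u} [SmallCategory D] [SmallCategory C] (P : D ⥤ C) {c c' : C}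
    (φ : c ⟶ c') : Type u :=
  {g : Σ a b : D, a ⟶ b // (⟨P.obj g.1, P.obj g.2.1, P.map g.2.2⟩ : Σ a b : C, a ⟶ b) = ⟨c, c', φ⟩}

namespace IsRamifiedCovering

variable {D C : Type u} [SmallCategory D] [SmallCategory C] {P : D ⥤ C} {e : D → ℕ}

theorem map_ne_id (h : IsRamifiedCovering P e) {a b : D} (k : a ⟶ b)
    (hk : (⟨b, k⟩ : Src D a) ≠ ⟨a, 𝟙 a⟩) :
    (⟨P.obj b, P.map k⟩ : Src C (P.obj a)) ≠ ⟨P.obj a, 𝟙 (P.obj a)⟩ := by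
  intro hPk
  obtain ⟨hba, hPk⟩ := Sigma.mk.inj_iff.mp hPk
  have hk_id : tgtMap P b ⟨a, k⟩ = tgtMap P b ⟨b, 𝟙 b⟩ := by
    simp only [tgtMap, P.map_id, Sigma.mk.inj_iff]
    exact ⟨hba.symm, hPk.trans (by rw [hba])⟩
  obtain ⟨rfl, hk_id⟩ := Sigma.mk.inj_iff.mp ((h.tgt_bij b).injective hk_id)
  exact hk (by rw [eq_of_heq hk_id])

theorem card_lift_eq_card_fiber (h : IsRamifiedCovering P e) {c c' : C} (φ : c ⟶ c') :
    Nat.card (Lift P φ) = Nat.card {b // P.obj b = c'} := by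
  refine Nat.card_congr (Equiv.ofBijective (fun g => ⟨g.1.2.1, congrArg (·.2.1) g.2⟩) ⟨?_, ?_⟩)
  · rintro ⟨⟨a, b, k⟩, hg⟩ ⟨⟨a', b', k'⟩, hg'⟩ hbb'
    obtain rfl : b = b' := congrArg Subtype.val hbb'
    obtain ⟨⟩ := (h.tgt_bij b).injective (a₁ := ⟨a, k⟩) (a₂ := ⟨a', k'⟩)
      (Tgt.eq_of_triple_eq (hg.trans hg'.symm))
    rfl
  · rintro ⟨b, rfl⟩
    obtain ⟨⟨a, k⟩, hk⟩ := (h.tgt_bij b).surjective ⟨c, φ⟩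
    exact ⟨⟨⟨a, b, k⟩, congrArg (fun t => (⟨t.1, P.obj b, t.2⟩ : Σ a b : C, a ⟶ b)) hk⟩, rfl⟩

theorem card_lift_from_eq_ram (h : IsRamifiedCovering P e) {a : D} {c' : C}
    (φ : P.obj a ⟶ c') (hφ : (⟨c', φ⟩ : Src C (P.obj a)) ≠ ⟨P.obj a, 𝟙 (P.obj a)⟩) :
    Nat.card {g : Lift P φ // g.1.1 = a} = e a := by
  rw [← h.src_count a ⟨c', φ⟩ hφ]
  refine Nat.card_congr (Equiv.ofBijective (fun s => ⟨⟨⟨a, s.1.1, s.1.2⟩,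
    congrArg (fun t => (⟨P.obj a, t.1, t.2⟩ : Σ a b : C, a ⟶ b)) s.2.2⟩, rfl⟩) ⟨?_, ?_⟩).symm
  · intro s s' hss'
    exact Subtype.ext (sigma_mk_injective (congrArg (·.1.1) hss'))
  · rintro ⟨⟨⟨a', b, k⟩, hg⟩, ha'⟩
    obtain rfl : a' = _ := ha'
    have hk : srcMap P a' ⟨b, k⟩ = ⟨c', φ⟩ := sigma_mk_injective hg
    refine ⟨⟨⟨b, k⟩, fun hid => hφ ?_, hk⟩, rfl⟩
    rw [← hk, hid, srcMap, P.map_id]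

theorem card_lift_eq_sum_ram (h : IsRamifiedCovering P e) {c c' : C}
    [Fintype {a // P.obj a = c}] (φ : c ⟶ c') (hφ : (⟨c', φ⟩ : Src C c) ≠ ⟨c, 𝟙 c⟩) :
    Nat.card (Lift P φ) = ∑ a : {a // P.obj a = c}, e a := by
  let source : Lift P φ → {a // P.obj a = c} := fun g => ⟨g.1.1, congrArg (·.1) g.2⟩
  have hfiber : ∀ a, Nat.card {g // source g = a} = e a := by
    rintro ⟨a, rfl⟩
    rw [← h.card_lift_from_eq_ram φ hφ]
    exact Nat.card_congr (Equiv.subtypeEquivRight fun g => Subtype.ext_iff)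
  have : ∀ a, Finite {g // source g = a} := fun a =>
    Nat.finite_of_card_ne_zero (by rw [hfiber]; exact Nat.one_le_iff_ne_zero.mp (h.one_le a))
  rw [← Nat.card_congr (Equiv.sigmaFiberEquiv source), Nat.card_sigma]
  exact Finset.sum_congr rfl fun a _ => hfiber a

theorem card_fiber_le (h : IsRamifiedCovering P e) {c c' : C} [Finite {a // P.obj a = c}]
    (φ : c ⟶ c') (hφ : (⟨c', φ⟩ : Src C c) ≠ ⟨c, 𝟙 c⟩) :
    Nat.card {a // P.obj a = c} ≤ Nat.card {b // P.obj b = c'} := by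
  have := Fintype.ofFinite {a // P.obj a = c}
  rw [← h.card_lift_eq_card_fiber φ, h.card_lift_eq_sum_ram φ hφ, Nat.card_eq_fintype_card,
    Fintype.card_eq_sum_ones]
  exact Finset.sum_le_sum fun a _ => h.one_le a

theorem ram_eq_one_of_card_fiber_le (h : IsRamifiedCovering P e) {c c' : C}
    [Finite {a // P.obj a = c}] (φ : c ⟶ c') (hφ : (⟨c', φ⟩ : Src C c) ≠ ⟨c, 𝟙 c⟩)
    (hle : Nat.card {b // P.obj b = c'} ≤ Nat.card {a // P.obj a = c}) {a : D}
    (ha : P.obj a = c) : e a = 1 := by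
  have := Fintype.ofFinite {a // P.obj a = c}
  rw [← h.card_lift_eq_card_fiber φ, h.card_lift_eq_sum_ram φ hφ, Nat.card_eq_fintype_card,
    ← Finset.card_univ] at hle
  exact Finset.eq_one_of_sum_le_card (f := fun a : {a // P.obj a = c} => e a)
    (fun a _ => h.one_le a) hle ⟨a, ha⟩ (Finset.mem_univ _)

end IsRamifiedCovering

theorem ramifiedCovering_cycle_ram_one_general {D C : Type u} [SmallCategory D] [SmallCategory C]
    (P : D ⥤ C) (e : D → ℕ) (h : IsRamifiedCovering P e)
    (hobj : ∀ c : C, {a : D | P.obj a = c}.Finite)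
    (n : ℕ) (hn : 1 ≤ n) (x : Fin (n + 1) → D)
    (f : ∀ i : Fin n, x i.castSucc ⟶ x i.succ)
    (hf : ∀ i : Fin n, (⟨x i.succ, f i⟩ : Src D (x i.castSucc)) ≠ ⟨x i.castSucc, 𝟙 _⟩)
    (hcyc : x (Fin.last n) = x 0) :
    e (x 0) = 1 ∧ ∀ i : Fin (n + 1), e (x i) = 1 := by
  have hfin (c : C) : Finite {a // P.obj a = c} := (hobj c).to_subtype
  let fiberCard (i : Fin (n + 1)) : ℕ := Nat.card {a // P.obj a = P.obj (x i)}
  have hPf (i : Fin n) := h.map_ne_id (f i) (hf i)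
  have hmono : Monotone fiberCard :=
    Fin.monotone_iff_le_succ.mpr fun i => h.card_fiber_le (P.map (f i)) (hPf i)
  have hle (i : Fin n) : fiberCard i.succ ≤ fiberCard i.castSucc :=
    calc fiberCard i.succ ≤ fiberCard (Fin.last n) := hmono (Fin.le_last _)
      _ = fiberCard 0 := by simp only [fiberCard, hcyc]
      _ ≤ fiberCard i.castSucc := hmono (Fin.zero_le _)
  have hram (i : Fin n) : e (x i.castSucc) = 1 :=
    h.ram_eq_one_of_card_fiber_le (P.map (f i)) (hPf i) (hle i) rfl
  have hram_zero : e (x 0) = 1 := hram ⟨0, hn⟩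
  exact ⟨hram_zero, Fin.lastCases (by rw [hcyc]; exact hram_zero) hram⟩

/-- If a ramified covering is finite to one and there is a composable
cycle of non-identity morphisms `x̃₀ → x̃₁ → ⋯ → x̃_{n-1} → x̃₀`, then `e(x̃₀) = 1`,
and hence `e(x̃ᵢ) = 1` for all `i`. -/
theorem ramifiedCovering_cycle_ram_one {D C : Type u} [SmallCategory D] [SmallCategory C]
    (P : D ⥤ C) (e : D → ℕ) (h : IsRamifiedCovering P e)
    (hobj : ∀ c : C, {a : D | P.obj a = c}.Finite)
    (hmor : ∀ m : Σ a b : C, a ⟶ b,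
      {g : Σ a b : D, a ⟶ b |
        (⟨P.obj g.1, P.obj g.2.1, P.map g.2.2⟩ : Σ a b : C, a ⟶ b) = m}.Finite)
    (n : ℕ) (hn : 1 ≤ n) (x : Fin (n + 1) → D)
    (f : ∀ i : Fin n, x i.castSucc ⟶ x i.succ)
    (hf : ∀ i : Fin n, (⟨x i.succ, f i⟩ : Src D (x i.castSucc)) ≠ ⟨x i.castSucc, 𝟙 _⟩)
    (hcyc : x (Fin.last n) = x 0) :
    e (x 0) = 1 ∧ ∀ i : Fin (n + 1), e (x i) = 1 :=
  ramifiedCovering_cycle_ram_one_general P e h hobj n hn x f hf hcyc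
end

section
/- Let P : C̃ → C together with ramification numbers e be a ramified covering of small categories. If f̃ : x̃ → ỹ is a non-identity morphism in C̃, then e(ỹ) = 1. -/
open CategoryTheory

universe u

/-!
Let `ψ : P y ⟶ d`. Since `P f` is not an identity it has exactly `e x` lifts at `x`, while
`P f ≫ ψ` has at most `e x`. Extending each lift of `P f` by a lift of `ψ` at its target is
injective, because `P` is injective on morphisms with a given target; so it is a bijection.
Hence for every lift `k` of `ψ` at `y`, the lift `f ≫ k` of `P f ≫ ψ` is the extension of `f`
itself, which determines `k`. Thus `ψ` has a single lift at `y`, and `e y = 1` when `ψ` is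
not an identity.
-/

section Morphisms

variable {B : Type u} [SmallCategory B]

lemma src_mk_eq_id_iff {a b : B} {m : a ⟶ b} :
    (⟨b, m⟩ : Src B a) = ⟨a, 𝟙 a⟩ ↔ (⟨a, m⟩ : Tgt B b) = ⟨b, 𝟙 b⟩ := by
  constructor <;> intro hm <;> obtain ⟨rfl, hm⟩ := Sigma.mk.inj_iff.mp hm <;> simp_all

lemma src_mk_comp_eq {a w c b d : B} {m : a ⟶ w} {φ : a ⟶ c} {k : w ⟶ b} {ψ : c ⟶ d}
    (hw : w = c) (hm : (⟨w, m⟩ : Src B a) = ⟨c, φ⟩)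
    (hk : (⟨b, k⟩ : Src B w) = ⟨d, eqToHom hw ≫ ψ⟩) :
    (⟨b, m ≫ k⟩ : Src B a) = ⟨d, φ ≫ ψ⟩ := by
  subst hw
  obtain ⟨rfl, hk⟩ := Sigma.mk.inj_iff.mp hk
  simp_all

lemma tgt_mk_eq_of_src_mk_eq {w w' c b d : B} {k : w ⟶ b} {k' : w' ⟶ b} {ψ : c ⟶ d}
    (hw : w = c) (hw' : w' = c) (hk : (⟨b, k⟩ : Src B w) = ⟨d, eqToHom hw ≫ ψ⟩)
    (hk' : (⟨b, k'⟩ : Src B w') = ⟨d, eqToHom hw' ≫ ψ⟩) :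
    (⟨w, k⟩ : Tgt B b) = ⟨w', k'⟩ := by
  subst hw hw'
  obtain ⟨rfl, hk⟩ := Sigma.mk.inj_iff.mp hk
  simp_all

end Morphisms

section Lifts

variable {D C : Type u} [SmallCategory D] [SmallCategory C] {P : D ⥤ C}

abbrev Lifts (P : D ⥤ C) (x : D) (g : Src C (P.obj x)) : Type u :=
  {k : Src D x // srcMap P x k = g}

lemma srcMap_id (x : D) : srcMap P x ⟨x, 𝟙 x⟩ = ⟨P.obj x, 𝟙 (P.obj x)⟩ := by
  simp [srcMap]

lemma srcMap_comp_eq {x w b : D} {c d : C} {m : x ⟶ w} {k : w ⟶ b} {φ : P.obj x ⟶ c}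
    {ψ : c ⟶ d} (hw : P.obj w = c) (hm : srcMap P x ⟨w, m⟩ = ⟨c, φ⟩)
    (hk : srcMap P w ⟨b, k⟩ = ⟨d, eqToHom hw ≫ ψ⟩) :
    srcMap P x ⟨b, m ≫ k⟩ = ⟨d, φ ≫ ψ⟩ := by
  simpa only [srcMap, P.map_comp] using src_mk_comp_eq hw hm hk

lemma eq_id_of_srcMap_eq_id (hP : ∀ b, Function.Injective (tgtMap P b))
    {x : D} {k : Src D x}
    (hk : srcMap P x k = ⟨P.obj x, 𝟙 (P.obj x)⟩) : k = ⟨x, 𝟙 x⟩ := by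
  obtain ⟨v, k⟩ := k
  rw [srcMap, src_mk_eq_id_iff] at hk
  rw [src_mk_eq_id_iff]
  exact hP v (by simpa [tgtMap] using hk)

lemma subsingleton_lifts_id (hP : ∀ b, Function.Injective (tgtMap P b))
    (x : D) : Subsingleton (Lifts P x ⟨P.obj x, 𝟙 (P.obj x)⟩) :=
  ⟨fun k k' => Subtype.ext <|
    (eq_id_of_srcMap_eq_id hP k.2).trans (eq_id_of_srcMap_eq_id hP k'.2).symm⟩

lemma eq_of_srcMap_eq_of_fst_eq (hP : ∀ b, Function.Injective (tgtMap P b))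
    {x : D} {k k' : Src D x} (hfst : k.1 = k'.1)
    (hk : srcMap P x k = srcMap P x k') : k = k' := by
  obtain ⟨w, m⟩ := k
  obtain ⟨w', m'⟩ := k'
  obtain rfl : w = w' := hfst
  have hm : tgtMap P w ⟨x, m⟩ = tgtMap P w ⟨x, m'⟩ := by simpa [srcMap, tgtMap] using hk
  simpa using hP w hm

end Lifts

namespace IsRamifiedCovering

variable {D C : Type u} [SmallCategory D] [SmallCategory C] {P : D ⥤ C} {e : D → ℕ}

lemma tgtMap_injective (h : IsRamifiedCovering P e) (b : D) : Function.Injective (tgtMap P b) :=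
  (h.tgt_bij b).injective

lemma card_lifts_of_ne_id (h : IsRamifiedCovering P e) {x : D} {g : Src C (P.obj x)}
    (hg : g ≠ ⟨P.obj x, 𝟙 (P.obj x)⟩) : Nat.card (Lifts P x g) = e x := by
  rw [← h.src_count x g hg]
  refine Nat.card_congr (Equiv.subtypeEquivRight fun k => ⟨fun hk => ⟨?_, hk⟩, And.right⟩)
  rintro rfl
  exact hg (hk.symm.trans (srcMap_id x))

lemma card_lifts_id (h : IsRamifiedCovering P e) (x : D) :
    Nat.card (Lifts P x ⟨P.obj x, 𝟙 (P.obj x)⟩) = 1 :=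
  Nat.card_eq_one_iff_unique.mpr
    ⟨subsingleton_lifts_id h.tgtMap_injective x, ⟨⟨⟨x, 𝟙 x⟩, srcMap_id x⟩⟩⟩

lemma card_lifts_le (h : IsRamifiedCovering P e) (x : D) (g : Src C (P.obj x)) :
    Nat.card (Lifts P x g) ≤ e x := by
  by_cases hg : g = ⟨P.obj x, 𝟙 (P.obj x)⟩
  · subst hg
    exact (h.card_lifts_id x).trans_le (h.one_le x)
  · exact (h.card_lifts_of_ne_id hg).le

lemma card_lifts_pos (h : IsRamifiedCovering P e) (x : D) (g : Src C (P.obj x)) :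
    0 < Nat.card (Lifts P x g) := by
  by_cases hg : g = ⟨P.obj x, 𝟙 (P.obj x)⟩
  · subst hg
    exact (h.card_lifts_id x).symm ▸ Nat.one_pos
  · exact (h.card_lifts_of_ne_id hg).symm ▸ h.one_le x

lemma finite_lifts (h : IsRamifiedCovering P e) (x : D) (g : Src C (P.obj x)) :
    Finite (Lifts P x g) :=
  (Nat.card_pos_iff.mp (h.card_lifts_pos x g)).2

lemma nonempty_lifts (h : IsRamifiedCovering P e) (x : D) (g : Src C (P.obj x)) :
    Nonempty (Lifts P x g) :=
  (Nat.card_pos_iff.mp (h.card_lifts_pos x g)).1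

noncomputable def extendLift (h : IsRamifiedCovering P e) {x : D} {c d : C} {φ : P.obj x ⟶ c}
    (ψ : c ⟶ d) (u : Lifts P x ⟨c, φ⟩) : Lifts P x ⟨d, φ ≫ ψ⟩ :=
  let hw : P.obj u.1.1 = c := congrArg Sigma.fst u.2
  let k := (h.nonempty_lifts u.1.1 ⟨d, eqToHom hw ≫ ψ⟩).some
  ⟨⟨k.1.1, u.1.2 ≫ k.1.2⟩, srcMap_comp_eq hw u.2 k.2⟩

lemma exists_extendLift_eq (h : IsRamifiedCovering P e) {x : D} {c d : C} {φ : P.obj x ⟶ c}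
    (ψ : c ⟶ d) (u : Lifts P x ⟨c, φ⟩) :
    ∃ (b : D) (k : u.1.1 ⟶ b), srcMap P u.1.1 ⟨b, k⟩ =
      ⟨d, eqToHom (congrArg Sigma.fst u.2) ≫ ψ⟩ ∧ (h.extendLift ψ u).1 = ⟨b, u.1.2 ≫ k⟩ :=
  ⟨_, _, (h.nonempty_lifts _ _).some.2, rfl⟩

lemma eq_of_extendLift_eq (h : IsRamifiedCovering P e) {x w b : D} {c d : C}
    {φ : P.obj x ⟶ c} {ψ : c ⟶ d} {u : Lifts P x ⟨c, φ⟩} {m : x ⟶ w} {k : w ⟶ b}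
    (hw : P.obj w = c) (hm : srcMap P x ⟨w, m⟩ = ⟨c, φ⟩)
    (hk : srcMap P w ⟨b, k⟩ = ⟨d, eqToHom hw ≫ ψ⟩) (hu : (h.extendLift ψ u).1 = ⟨b, m ≫ k⟩) :
    u.1 = ⟨w, m⟩ := by
  obtain ⟨b', k', hk', hu'⟩ := h.exists_extendLift_eq ψ u
  obtain rfl : b' = b := congrArg Sigma.fst (hu'.symm.trans hu)
  have hkk' : tgtMap P b' ⟨u.1.1, k'⟩ = tgtMap P b' ⟨w, k⟩ :=
    tgt_mk_eq_of_src_mk_eq _ hw hk' hk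
  have hsrc : u.1.1 = w := congrArg Sigma.fst (h.tgtMap_injective _ hkk')
  exact eq_of_srcMap_eq_of_fst_eq h.tgtMap_injective hsrc (u.2.trans hm.symm)

lemma extendLift_injective (h : IsRamifiedCovering P e) {x : D} {c d : C} {φ : P.obj x ⟶ c}
    (ψ : c ⟶ d) : Function.Injective (h.extendLift ψ (φ := φ)) := by
  intro u u' huu'
  obtain ⟨b, k, hk, hu'⟩ := h.exists_extendLift_eq ψ u'
  exact Subtype.ext (h.eq_of_extendLift_eq _ u'.2 hk ((congrArg Subtype.val huu').trans hu'))

lemma extendLift_surjective (h : IsRamifiedCovering P e) {x : D} {c d : C} {φ : P.obj x ⟶ c}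
    (hφ : (⟨c, φ⟩ : Src C (P.obj x)) ≠ ⟨P.obj x, 𝟙 (P.obj x)⟩) (ψ : c ⟶ d) :
    Function.Surjective (h.extendLift ψ (φ := φ)) := by
  have := h.finite_lifts x ⟨d, φ ≫ ψ⟩
  refine ((Nat.bijective_iff_injective_and_card _).mpr ⟨h.extendLift_injective ψ, ?_⟩).2
  refine le_antisymm (Nat.card_le_card_of_injective _ (h.extendLift_injective ψ)) ?_
  rw [h.card_lifts_of_ne_id hφ]
  exact h.card_lifts_le x _

lemma subsingleton_lifts_of_ne_id (h : IsRamifiedCovering P e) {x y : D} {f : x ⟶ y}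
    (hf : (⟨y, f⟩ : Src D x) ≠ ⟨x, 𝟙 x⟩) (d : C) (ψ : P.obj y ⟶ d) :
    Subsingleton (Lifts P y ⟨d, ψ⟩) := by
  let u₀ : Lifts P x ⟨P.obj y, P.map f⟩ := ⟨⟨y, f⟩, rfl⟩
  have hPf : (⟨P.obj y, P.map f⟩ : Src C (P.obj x)) ≠ ⟨P.obj x, 𝟙 (P.obj x)⟩ :=
    fun hPf => hf (eq_id_of_srcMap_eq_id h.tgtMap_injective hPf)
  have target_eq : ∀ k : Lifts P y ⟨d, ψ⟩, k.1.1 = (h.extendLift ψ u₀).1.1 := by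
    rintro ⟨⟨b, k⟩, hk⟩
    have hk' : srcMap P y ⟨b, k⟩ = ⟨d, eqToHom rfl ≫ ψ⟩ := by simpa using hk
    obtain ⟨u, hu⟩ := h.extendLift_surjective hPf ψ ⟨⟨b, f ≫ k⟩, srcMap_comp_eq rfl rfl hk'⟩
    obtain rfl : u = u₀ :=
      Subtype.ext (h.eq_of_extendLift_eq rfl rfl hk' (congrArg Subtype.val hu))
    rw [hu]
  exact ⟨fun k k' => Subtype.ext <| eq_of_srcMap_eq_of_fst_eq h.tgtMap_injective
    ((target_eq k).trans (target_eq k').symm) (k.2.trans k'.2.symm)⟩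

end IsRamifiedCovering

/-- If `f̃ : x̃ ⟶ ỹ` is a non-identity morphism of `C̃`, then `e(ỹ) = 1`. -/
theorem ramifiedCovering_target_ram_one {D C : Type u} [SmallCategory D] [SmallCategory C]
    (P : D ⥤ C) (e : D → ℕ) (h : IsRamifiedCovering P e) {x y : D} (f : x ⟶ y)
    (hf : (⟨y, f⟩ : Src D x) ≠ ⟨x, 𝟙 x⟩) :
    e y = 1 := by
  by_cases hS : ∀ g : Src C (P.obj y), g = ⟨P.obj y, 𝟙 (P.obj y)⟩
  · exact h.ram_one y hS
  push Not at hS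
  obtain ⟨⟨d, ψ⟩, hψ⟩ := hS
  rw [← h.card_lifts_of_ne_id hψ]
  exact Nat.card_eq_one_iff_unique.mpr ⟨h.subsingleton_lifts_of_ne_id hf d ψ, h.nonempty_lifts y _⟩
end

section
/- Let P : C̃ → C together with ramification numbers e be a ramified covering of small categories, let x̃ be an object of C̃ and x = P(x̃). Then for every n ≥ 1, the map induced by P from N̄_n(C̃)^{x̃} to N̄_n(C)^{x} is e(x̃)-to-one: every chain in N̄_n(C)^{x} has exactly e(x̃) preimages in N̄_n(C̃)^{x̃}. -/
open CategoryTheory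

universe u

/-- A composable chain of `n` morphisms `x₀ → x₁ → ⋯ → xₙ` in `C`
(an element of `N_n(C)`). -/
structure Chain (C : Type u) [SmallCategory C] (n : ℕ) : Type u where
  obj : Fin (n + 1) → C
  map : ∀ i : Fin n, obj i.castSucc ⟶ obj i.succ

/-- A chain is non-degenerate if none of its morphisms is an identity
(an element of `N̄_n(C)`). -/
def Chain.NonDeg {C : Type u} [SmallCategory C] {n : ℕ} (c : Chain C n) : Prop :=
  ∀ i : Fin n,
    (⟨c.obj i.succ, c.map i⟩ : Src C (c.obj i.castSucc)) ≠ ⟨c.obj i.castSucc, 𝟙 _⟩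

/-- The image of a chain under a functor `P`. -/
def Chain.push {D C : Type u} [SmallCategory D] [SmallCategory C] (P : D ⥤ C) {n : ℕ}
    (c : Chain D n) : Chain C n :=
  ⟨fun i => P.obj (c.obj i), fun i => P.map (c.map i)⟩

/-- The constant identity chain `1_x` at an object `x`. -/
def Chain.const (C : Type u) [SmallCategory C] (x : C) (n : ℕ) : Chain C n :=
  ⟨fun _ => x, fun _ => 𝟙 x⟩

/-!
Since `T(x̃) → T(P x̃)` is bijective, a morphism of `C̃` is determined by its target and its
image under `P`. So if `f : w ⟶ x` lifts a non-identity and `g ∈ S̄(P x)`, composing each lift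
`a` of `P f` at `w` with the lifts of `g` at the target of `a` gives pairwise distinct lifts
of `P f ≫ g`: at least `e(x) + e(w) - 1` of them, but at most `e(w)` (only one if `P f ≫ g` is
an identity). Hence `e(x) = 1`, so beyond its first edge a lift of a non-degenerate chain exists
and is unique, and the lifts starting at `x̃` correspond to the `e(x̃)` lifts of the first edge.
-/

-- All morphisms of `C` as one sigma type, so that morphisms whose endpoints are only
-- propositionally equal can be compared without `eqToHom`.
abbrev Mor (C : Type u) [SmallCategory C] : Type u := Σ a : C, Src C a

namespace Mor

variable {C D : Type u} [SmallCategory C] [SmallCategory D]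

def identity (a : C) : Mor C := ⟨a, a, 𝟙 a⟩

def IsId (α : Mor C) : Prop := α.2 = ⟨α.1, 𝟙 α.1⟩

def map (P : D ⥤ C) (α : Mor D) : Mor C := ⟨P.obj α.1, srcMap P α.1 α.2⟩

def comp (α β : Mor C) (h : α.2.1 = β.1) : Mor C :=
  ⟨α.1, β.2.1, α.2.2 ≫ eqToHom h ≫ β.2.2⟩

lemma isId_iff {α : Mor C} : α.IsId ↔ α = identity α.2.1 := by
  obtain ⟨a, b, f⟩ := α
  constructor
  · intro h
    obtain ⟨rfl, h⟩ := Sigma.mk.inj_iff.mp h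
    rw [eq_of_heq h]; rfl
  · intro h
    obtain ⟨rfl, h⟩ := Sigma.mk.inj_iff.mp h
    exact eq_of_heq h

lemma IsId.fst_eq {α : Mor C} (h : α.IsId) : α.1 = α.2.1 :=
  congrArg Sigma.fst (isId_iff.mp h)

lemma map_identity (P : D ⥤ C) (a : D) : (identity a).map P = identity (P.obj a) := by
  simp [identity, Mor.map, srcMap]

lemma IsId.map {α : Mor D} (h : α.IsId) (P : D ⥤ C) : (α.map P).IsId := by
  rw [isId_iff] at h ⊢
  rw [h, map_identity]
  rfl

lemma map_comp (P : D ⥤ C) (α β : Mor D) (h : α.2.1 = β.1) :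
    (comp α β h).map P = comp (α.map P) (β.map P) (congrArg P.obj h) := by
  simp [comp, Mor.map, srcMap, eqToHom_map]

lemma mk_eq_mk_iff_tgt {a a' b : C} {f : a ⟶ b} {f' : a' ⟶ b} :
    (⟨a, b, f⟩ : Mor C) = ⟨a', b, f'⟩ ↔ (⟨a, f⟩ : Tgt C b) = ⟨a', f'⟩ := by
  constructor <;> intro h <;> obtain ⟨rfl, h⟩ := Sigma.mk.inj_iff.mp h <;> simp_all

lemma comp_congr {α α' β β' : Mor C} {h : α.2.1 = β.1} {h' : α'.2.1 = β'.1} (hα : α = α')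
    (hβ : β = β') : comp α β h = comp α' β' h' := by
  subst hα hβ; rfl

end Mor

namespace Chain

variable {C D : Type u} [SmallCategory C] [SmallCategory D] {n : ℕ}

def edge (c : Chain C n) (i : Fin n) : Mor C := ⟨c.obj i.castSucc, c.obj i.succ, c.map i⟩

def tail (c : Chain C (n + 1)) : Chain C n := ⟨fun i => c.obj i.succ, fun i => c.map i.succ⟩

def cons (α : Mor C) (t : Chain C n) (h : α.2.1 = t.obj 0) : Chain C (n + 1) :=
  ⟨Fin.cons α.1 t.obj, Fin.cases (α.2.2 ≫ eqToHom h) t.map⟩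

lemma ext_of_edge {c d : Chain C n} (h₀ : c.obj 0 = d.obj 0) (h : ∀ i, c.edge i = d.edge i) :
    c = d := by
  obtain ⟨o, m⟩ := c
  obtain ⟨o', m'⟩ := d
  obtain rfl : o = o' := funext fun i =>
    Fin.cases h₀ (fun i => congrArg (fun α : Mor C => α.2.1) (h i)) i
  congr
  funext i
  simpa [edge] using h i

lemma ext_edge_zero_tail {c d : Chain C (n + 1)} (h₀ : c.edge 0 = d.edge 0)
    (ht : c.tail = d.tail) : c = d :=
  ext_of_edge (congrArg Sigma.fst h₀) fun i => Fin.cases h₀ (fun i => congrArg (edge · i) ht) i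

lemma edge_cons_zero (α : Mor C) (t : Chain C n) (h : α.2.1 = t.obj 0) :
    (cons α t h).edge 0 = α := by
  obtain ⟨a, b, f⟩ := α
  dsimp only at h
  subst h
  change (⟨a, t.obj 0, f ≫ eqToHom rfl⟩ : Mor C) = ⟨a, t.obj 0, f⟩
  rw [eqToHom_refl, Category.comp_id]

lemma tail_cons (α : Mor C) (t : Chain C n) (h : α.2.1 = t.obj 0) : (cons α t h).tail = t := rfl

lemma push_edge (P : D ⥤ C) (c : Chain D n) (i : Fin n) : (c.push P).edge i = (c.edge i).map P :=
  rfl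

lemma push_tail (P : D ⥤ C) (c : Chain D (n + 1)) : (c.push P).tail = c.tail.push P := rfl

lemma NonDeg.not_isId {c : Chain C n} (hc : c.NonDeg) (i : Fin n) : ¬(c.edge i).IsId := hc i

lemma NonDeg.tail {c : Chain C (n + 1)} (hc : c.NonDeg) : c.tail.NonDeg := fun i => hc i.succ

lemma NonDeg.of_push {P : D ⥤ C} {c : Chain D n} (hc : (c.push P).NonDeg) : c.NonDeg :=
  fun i hi => hc i (Mor.IsId.map (α := c.edge i) hi P)

end Chain

section Lifts

variable {C D : Type u} [SmallCategory C] [SmallCategory D] (P : D ⥤ C)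

abbrev MorLifts (x : D) (γ : Mor C) : Type u := {α : Mor D // α.1 = x ∧ α.map P = γ}

abbrev ChainLifts (x : D) {n : ℕ} (c : Chain C n) : Type u :=
  {c' : Chain D n // c'.obj 0 = x ∧ c'.push P = c}

lemma card_chainLifts_zero {x : D} {c : Chain C 0} (hx : c.obj 0 = P.obj x) :
    Nat.card (ChainLifts P x c) = 1 := by
  have hpush : (Chain.const D x 0).push P = c :=
    Chain.ext_of_edge hx.symm fun i => i.elim0
  refine Nat.card_eq_one_iff_unique.mpr ⟨⟨fun c₁ c₂ => ?_⟩, ⟨⟨_, rfl, hpush⟩⟩⟩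
  exact Subtype.ext (Chain.ext_of_edge (c₁.2.1.trans c₂.2.1.symm) fun i => i.elim0)

lemma card_chainLifts_succ {x : D} {n : ℕ} (c : Chain C (n + 1))
    (htail : ∀ α : MorLifts P x (c.edge 0), Nat.card (ChainLifts P α.1.2.1 c.tail) = 1) :
    Nat.card (ChainLifts P x c) = Nat.card (MorLifts P x (c.edge 0)) := by
  let head : ChainLifts P x c → MorLifts P x (c.edge 0) := fun c' =>
    ⟨c'.1.edge 0, c'.2.1, by rw [← Chain.push_edge, c'.2.2]⟩
  refine Nat.card_congr (Equiv.ofBijective head ⟨fun c₁ c₂ h => ?_, fun α => ?_⟩)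
  · have h₀ : c₁.1.edge 0 = c₂.1.edge 0 := congrArg Subtype.val h
    have := (Nat.card_eq_one_iff_unique.mp (htail (head c₁))).1
    have ht : (⟨c₁.1.tail, rfl, by rw [← Chain.push_tail, c₁.2.2]⟩ :
        ChainLifts P (head c₁).1.2.1 c.tail) =
        ⟨c₂.1.tail, congrArg (fun α : Mor D => α.2.1) h₀.symm,
          by rw [← Chain.push_tail, c₂.2.2]⟩ := Subsingleton.elim _ _
    exact Subtype.ext (Chain.ext_edge_zero_tail h₀ (congrArg Subtype.val ht))
  · obtain ⟨t, ht₀, ht⟩ := (Nat.card_eq_one_iff_unique.mp (htail α)).2.some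
    refine ⟨⟨Chain.cons α.1 t ht₀.symm, α.2.1, Chain.ext_edge_zero_tail ?_ ?_⟩, ?_⟩
    · rw [Chain.push_edge, Chain.edge_cons_zero, α.2.2]
    · rw [Chain.push_tail, Chain.tail_cons, ht]
    · exact Subtype.ext (Chain.edge_cons_zero _ _ _)

end Lifts

namespace IsRamifiedCovering

variable {C D : Type u} [SmallCategory C] [SmallCategory D] {P : D ⥤ C} {e : D → ℕ}
  (hP : IsRamifiedCovering P e)
include hP

lemma eq_of_map_eq_of_target_eq {α β : Mor D} (ht : α.2.1 = β.2.1) (hm : α.map P = β.map P) :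
    α = β := by
  obtain ⟨a, z, f⟩ := α
  obtain ⟨b, z', g⟩ := β
  dsimp only at ht
  subst ht
  exact Mor.mk_eq_mk_iff_tgt.mpr ((hP.tgt_bij z).1 (Mor.mk_eq_mk_iff_tgt.mp hm))

lemma eq_of_map_eq_of_target_eq₂ {a a' b b' : Mor D} (hab : a.2.1 = b.1) (hab' : a'.2.1 = b'.1)
    (ht : b.2.1 = b'.2.1) (ha : a.map P = a'.map P) (hb : b.map P = b'.map P) :
    a = a' ∧ b = b' := by
  obtain rfl := hP.eq_of_map_eq_of_target_eq ht hb
  exact ⟨hP.eq_of_map_eq_of_target_eq (hab.trans hab'.symm) ha, rfl⟩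

lemma isId_of_map_isId {α : Mor D} (h : (α.map P).IsId) : α.IsId := by
  rw [Mor.isId_iff] at h ⊢
  exact hP.eq_of_map_eq_of_target_eq rfl (h.trans (Mor.map_identity P _).symm)

lemma card_morLifts {x : D} {γ : Mor C} (hγ : γ.1 = P.obj x) (hne : ¬γ.IsId) :
    Nat.card (MorLifts P x γ) = e x := by
  obtain ⟨a, g⟩ := γ
  dsimp only at hγ
  subst hγ
  rw [← hP.src_count x g hne]
  symm
  refine Nat.card_congr (Equiv.ofBijective
    (fun h => ⟨⟨x, h.1⟩, rfl, congrArg (Sigma.mk (P.obj x)) h.2.2⟩)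
    ⟨fun _ _ h => Subtype.ext (eq_of_heq (Sigma.mk.inj_iff.mp (congrArg Subtype.val h)).2), ?_⟩)
  rintro ⟨⟨x', h⟩, hx, hh⟩
  dsimp only at hx
  subst x'
  have hg : srcMap P x h = g := eq_of_heq (Sigma.mk.inj_iff.mp hh).2
  refine ⟨⟨h, fun hid => hne ?_, hg⟩, rfl⟩
  rw [← hg, hid]
  exact Mor.IsId.map (α := ⟨x, x, 𝟙 x⟩) rfl P

lemma card_morLifts_of_isId {x : D} {γ : Mor C} (hγ : γ.1 = P.obj x) (hid : γ.IsId) :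
    Nat.card (MorLifts P x γ) = 1 := by
  have hγ' : γ = Mor.identity (P.obj x) :=
    (Mor.isId_iff.mp hid).trans (by rw [← hid.fst_eq, hγ])
  have eq_identity (α : MorLifts P x γ) : α.1 = Mor.identity x := by
    have hα := hP.isId_of_map_isId (α.2.2 ▸ hid)
    rw [Mor.isId_iff.mp hα, ← hα.fst_eq, α.2.1]
  refine Nat.card_eq_one_iff_unique.mpr
    ⟨⟨fun α β => Subtype.ext ((eq_identity α).trans (eq_identity β).symm)⟩,
      ⟨⟨Mor.identity x, rfl, by rw [Mor.map_identity, hγ']⟩⟩⟩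

lemma ram_ne_zero (x : D) : e x ≠ 0 := Nat.one_le_iff_ne_zero.mp (hP.one_le x)

lemma card_morLifts_le {x : D} {γ : Mor C} (hγ : γ.1 = P.obj x) :
    Nat.card (MorLifts P x γ) ≤ e x := by
  by_cases hid : γ.IsId
  · exact (hP.card_morLifts_of_isId hγ hid).trans_le (hP.one_le x)
  · exact (hP.card_morLifts hγ hid).le

lemma card_morLifts_ne_zero {x : D} {γ : Mor C} (hγ : γ.1 = P.obj x) :
    Nat.card (MorLifts P x γ) ≠ 0 := by
  by_cases hid : γ.IsId
  · exact (hP.card_morLifts_of_isId hγ hid).trans_ne one_ne_zero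
  · exact (hP.card_morLifts hγ hid).trans_ne (hP.ram_ne_zero x)

lemma ram_target_eq_one_of_not_isId {α : Mor D} (hα : ¬(α.map P).IsId) : e α.2.1 = 1 := by
  by_cases hS : ∀ g : Src C (P.obj α.2.1), g = ⟨P.obj α.2.1, 𝟙 _⟩
  · exact hP.ram_one _ hS
  obtain ⟨g, hg⟩ := not_forall.mp hS
  let γ : Mor C := ⟨P.obj α.2.1, g⟩
  let A := MorLifts P α.1 (α.map P)
  let B (a : A) := MorLifts P a.1.2.1 γ
  let L := MorLifts P α.1 (Mor.comp (α.map P) γ rfl)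
  have hA : Nat.card A = e α.1 := hP.card_morLifts rfl hα
  have hB (a : A) : Nat.card (B a) = e a.1.2.1 :=
    hP.card_morLifts (congrArg (fun β : Mor C => β.2.1) a.2.2).symm hg
  let compose : (Σ a : A, B a) → L := fun p =>
    ⟨Mor.comp p.1.1 p.2.1 p.2.2.1.symm, p.1.2.1,
      by rw [Mor.map_comp]; exact Mor.comp_congr p.1.2.2 p.2.2.2⟩
  have compose_inj : Function.Injective compose := by
    rintro ⟨a, b⟩ ⟨a', b'⟩ h
    obtain ⟨ha, hb⟩ := hP.eq_of_map_eq_of_target_eq₂ b.2.1.symm b'.2.1.symm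
      (congrArg (fun l : L => l.1.2.1) h) (a.2.2.trans a'.2.2.symm) (b.2.2.trans b'.2.2.symm)
    obtain rfl := Subtype.ext ha
    obtain rfl := Subtype.ext hb
    rfl
  have : Finite L := Nat.finite_of_card_ne_zero (hP.card_morLifts_ne_zero rfl)
  have : Fintype A := @Fintype.ofFinite _ (Nat.finite_of_card_ne_zero (hA ▸ hP.ram_ne_zero _))
  have (a : A) : Finite (B a) := Nat.finite_of_card_ne_zero ((hB a) ▸ hP.ram_ne_zero _)
  have hsum : ∑ a : A, e a.1.2.1 ≤ ∑ _a : A, 1 := calc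
    ∑ a : A, e a.1.2.1 = Nat.card (Σ a, B a) := by simp only [Nat.card_sigma, hB]
    _ ≤ Nat.card L := Nat.card_le_card_of_injective _ compose_inj
    _ ≤ e α.1 := hP.card_morLifts_le rfl
    _ = ∑ _a : A, 1 := by simp [← hA, Nat.card_eq_fintype_card]
  by_contra hx
  have := Finset.sum_lt_sum (s := Finset.univ) (f := fun _ : A => 1)
    (g := fun a : A => e a.1.2.1) (fun a _ => hP.one_le a.1.2.1)
    ⟨⟨α, rfl, rfl⟩, Finset.mem_univ _, lt_of_le_of_ne (hP.one_le _) (Ne.symm hx)⟩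
  omega

lemma card_chainLifts_of_card_tail {x : D} {n : ℕ} {c : Chain C (n + 1)} (hc : c.NonDeg)
    (hx : c.obj 0 = P.obj x)
    (htail : ∀ y, e y = 1 → c.tail.obj 0 = P.obj y → Nat.card (ChainLifts P y c.tail) = 1) :
    Nat.card (ChainLifts P x c) = e x := by
  have hfibre (α : MorLifts P x (c.edge 0)) : Nat.card (ChainLifts P α.1.2.1 c.tail) = 1 :=
    htail _ (hP.ram_target_eq_one_of_not_isId (by rw [α.2.2]; exact hc.not_isId 0))
      (congrArg (fun γ : Mor C => γ.2.1) α.2.2.symm)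
  rw [card_chainLifts_succ P c hfibre, hP.card_morLifts hx (hc.not_isId 0)]

lemma card_chainLifts_of_ram_eq_one {n : ℕ} {c : Chain C n} (hc : c.NonDeg) {y : D}
    (hy : e y = 1) (hx : c.obj 0 = P.obj y) : Nat.card (ChainLifts P y c) = 1 := by
  induction n generalizing y with
  | zero => exact card_chainLifts_zero P hx
  | succ n ih => rw [hP.card_chainLifts_of_card_tail hc hx fun _ => ih hc.tail, hy]

theorem card_chainLifts {n : ℕ} {c : Chain C (n + 1)} (hc : c.NonDeg) {x : D}
    (hx : c.obj 0 = P.obj x) : Nat.card (ChainLifts P x c) = e x :=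
  hP.card_chainLifts_of_card_tail hc hx fun _ => hP.card_chainLifts_of_ram_eq_one hc.tail

end IsRamifiedCovering

/-- For a ramified covering `P`, an object `xt` over `x` and `n ≥ 1`,
the induced map `N̄_n(C̃)^{xt} → N̄_n(C)^{x}` is `e(xt)`-to-one: every non-degenerate
chain starting at `x` has exactly `e(xt)` non-degenerate lifts starting at `xt`. -/
theorem ramifiedCovering_nonDeg_chain_count {D C : Type u} [SmallCategory D] [SmallCategory C]
    (P : D ⥤ C) (e : D → ℕ) (h : IsRamifiedCovering P e) (xt : D)
    (n : ℕ) (hn : 1 ≤ n) (c : Chain C n) (hc : c.NonDeg) (hx : c.obj 0 = P.obj xt) :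
    Nat.card {c' : Chain D n // c'.NonDeg ∧ c'.obj 0 = xt ∧ c'.push P = c} = e xt := by
  obtain ⟨m, rfl⟩ : ∃ m, n = m + 1 := ⟨n - 1, by omega⟩
  rw [← h.card_chainLifts hc hx]
  exact Nat.card_congr (Equiv.subtypeEquivRight fun c' =>
    ⟨And.right, fun hc' => ⟨Chain.NonDeg.of_push (by rwa [hc'.2]), hc'⟩⟩)
end

section
/- Let P : C̃ → C together with ramification numbers e be a ramified covering of small categories. For an object x of C, let R(x) denote the multiset of objects x̃ of C̃ with P(x̃) = x, each x̃ counted with multiplicity e(x̃); equivalently its cardinality is Σ_{x̃ ∈ P⁻¹(x)} e(x̃). Then the cardinality of R(x) is independent of the choice of the object x of C: for any two objects x, y of C there is a bijection R(x) ≅ R(y). -/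
/-!
Count the morphisms of `D` lying over a non-identity `f : x ⟶ y` in two ways. By source, each
`a` over `x` contributes `e a` of them; by target, each `b` over `y` contributes exactly one,
because `P` is a discrete fibration (bijectivity on `T(b)`). So `|R(x)| = |P⁻¹(y)|`.
It remains to see `|R(y)| = |P⁻¹(y)|`: if `S̄(y)` is empty all ramification numbers over `y`
are `1`; otherwise compare through a non-identity `g : y ⟶ z` and the composites `f ≫ g`,
`g ≫ f`. When both composites are identities, `f` is an isomorphism, and unique lifting of
`f` and `g` gives mutually inverse maps between the fibres over `y` and `x`.
Connectedness of `C` then propagates the equality `|R(x)| = |R(y)|` along zigzags.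
-/

open CategoryTheory

universe u

section ArrowLemmas

variable {C : Type u} [SmallCategory C]

lemma Src.ext_iff_arrow {x : C} (s t : Src C x) : s = t ↔ Arrow.mk s.2 = Arrow.mk t.2 := by
  refine ⟨fun h => h ▸ rfl, fun h => ?_⟩
  obtain ⟨b, s⟩ := s
  obtain ⟨b', t⟩ := t
  obtain rfl : b = b' := congrArg Arrow.right h
  obtain rfl : s = t := (Arrow.mk_inj _ _).1 h
  rfl

lemma Tgt.ext_iff_arrow {x : C} (s t : Tgt C x) : s = t ↔ Arrow.mk s.2 = Arrow.mk t.2 := by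
  refine ⟨fun h => h ▸ rfl, fun h => ?_⟩
  obtain ⟨a, s⟩ := s
  obtain ⟨a', t⟩ := t
  obtain rfl : a = a' := congrArg Arrow.left h
  obtain rfl : s = t := (Arrow.mk_inj _ _).1 h
  rfl

lemma CategoryTheory.Arrow.mk_comp_eq_mk_comp {a b c x y z : C} {u : a ⟶ b} {v : b ⟶ c}
    {f : x ⟶ y} {g : y ⟶ z} (hu : Arrow.mk u = Arrow.mk f) (hv : Arrow.mk v = Arrow.mk g) :
    Arrow.mk (u ≫ v) = Arrow.mk (f ≫ g) := by
  obtain ⟨rfl, rfl, rfl⟩ := (Arrow.mk_eq_mk_iff u f).1 hu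
  obtain ⟨-, rfl, rfl⟩ := (Arrow.mk_eq_mk_iff v g).1 hv
  simp

end ArrowLemmas

section Fibers

variable {D C : Type u} [SmallCategory D] [SmallCategory C] (P : D ⥤ C)

abbrev fiber (x : C) : Type u := {a : D // P.obj a = x}

abbrev ramifiedFiber (e : D → ℕ) (x : C) : Type u := Σ a : fiber P x, Fin (e a.1)

/-- The morphisms of `D` lying over `f`; comparing in `Arrow C` absorbs the transport along
`P.obj a = x` and `P.obj b = y`. -/
abbrev HomLift {x y : C} (f : x ⟶ y) : Type u :=
  {φ : Arrow D // Arrow.mk (P.map φ.hom) = Arrow.mk f}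

variable {P}

def HomLift.source {x y : C} {f : x ⟶ y} (φ : HomLift P f) : fiber P x :=
  ⟨φ.1.left, congrArg Arrow.left φ.2⟩

def HomLift.target {x y : C} {f : x ⟶ y} (φ : HomLift P f) : fiber P y :=
  ⟨φ.1.right, congrArg Arrow.right φ.2⟩

def HomLift.id {x : C} (b : fiber P x) : HomLift P (𝟙 x) :=
  ⟨Arrow.mk (𝟙 b.1), by obtain ⟨b, rfl⟩ := b; simp⟩

def HomLift.comp {x y z : C} {f : x ⟶ y} {g : y ⟶ z} (φ : HomLift P f) (ψ : HomLift P g)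
    (h : φ.1.right = ψ.1.left) : HomLift P (f ≫ g) :=
  ⟨Arrow.mk (φ.1.hom ≫ eqToHom h ≫ ψ.1.hom), by
    change Arrow.mk (P.map (φ.1.hom ≫ eqToHom h ≫ ψ.1.hom)) = _
    rw [Functor.map_comp]
    refine Arrow.mk_comp_eq_mk_comp φ.2 ?_
    rw [Functor.map_comp, eqToHom_map, Arrow.arrow_mk_eqToHom_comp]
    exact ψ.2⟩

lemma HomLift.target_bijective (hP : ∀ b, Function.Bijective (tgtMap P b)) {x y : C}
    (f : x ⟶ y) : Function.Bijective (HomLift.target (P := P) (f := f)) := by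
  constructor
  · rintro ⟨φ, hφ⟩ ⟨ψ, hψ⟩ hφψ
    obtain ⟨a, b, φ⟩ := φ
    obtain ⟨a', b', ψ⟩ := ψ
    obtain rfl : b = b' := congrArg Subtype.val hφψ
    have : tgtMap P b ⟨a, φ⟩ = tgtMap P b ⟨a', ψ⟩ :=
      (Tgt.ext_iff_arrow _ _).2 (hφ.trans hψ.symm)
    cases (hP b).injective this
    rfl
  · rintro ⟨b, rfl⟩
    obtain ⟨t, ht⟩ := (hP b).surjective ⟨x, f⟩
    exact ⟨⟨Arrow.mk t.2, (Tgt.ext_iff_arrow _ _).1 ht⟩, rfl⟩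

noncomputable def fiberMap (hP : ∀ b, Function.Bijective (tgtMap P b)) {x y : C} (f : x ⟶ y)
    (b : fiber P y) : fiber P x :=
  ((Equiv.ofBijective _ (HomLift.target_bijective hP f)).symm b).source

lemma fiberMap_target_eq_source (hP : ∀ b, Function.Bijective (tgtMap P b)) {x y : C}
    {f : x ⟶ y} (φ : HomLift P f) : fiberMap hP f φ.target = φ.source :=
  congrArg HomLift.source
    ((Equiv.ofBijective _ (HomLift.target_bijective hP f)).symm_apply_apply φ)

lemma fiberMap_id (hP : ∀ b, Function.Bijective (tgtMap P b)) {x : C} (b : fiber P x) :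
    fiberMap hP (𝟙 x) b = b :=
  fiberMap_target_eq_source hP (HomLift.id b)

lemma fiberMap_comp (hP : ∀ b, Function.Bijective (tgtMap P b)) {x y z : C} (f : x ⟶ y)
    (g : y ⟶ z) (c : fiber P z) : fiberMap hP (f ≫ g) c = fiberMap hP f (fiberMap hP g c) := by
  obtain ⟨ψ, rfl⟩ := (HomLift.target_bijective hP g).surjective c
  obtain ⟨φ, hφ⟩ := (HomLift.target_bijective hP f).surjective ψ.source
  rw [fiberMap_target_eq_source, ← hφ, fiberMap_target_eq_source]
  exact fiberMap_target_eq_source hP (φ.comp ψ (congrArg Subtype.val hφ))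

noncomputable def fiberEquivOfIso (hP : ∀ b, Function.Bijective (tgtMap P b)) {x y : C}
    (i : x ≅ y) : fiber P x ≃ fiber P y where
  toFun := fiberMap hP i.inv
  invFun := fiberMap hP i.hom
  left_inv a := by rw [← fiberMap_comp, i.hom_inv_id, fiberMap_id]
  right_inv b := by rw [← fiberMap_comp, i.inv_hom_id, fiberMap_id]

variable (P) in
abbrev homLiftsFrom {x y : C} (f : x ⟶ y) (a : D) : Type u :=
  {s : Src D a // Arrow.mk (P.map s.2) = Arrow.mk f}

def HomLift.equivSigmaHomLiftsFrom {x y : C} (f : x ⟶ y) :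
    HomLift P f ≃ Σ a : fiber P x, homLiftsFrom P f a.1 where
  toFun φ := ⟨φ.source, ⟨φ.1.right, φ.1.hom⟩, φ.2⟩
  invFun p := ⟨Arrow.mk p.2.1.2, p.2.2⟩
  left_inv _ := rfl
  right_inv _ := rfl

lemma card_homLiftsFrom {e : D → ℕ} (h : IsRamifiedCovering P e) {x y : C} {f : x ⟶ y}
    (hf : (⟨y, f⟩ : Src C x) ≠ ⟨x, 𝟙 x⟩) (a : fiber P x) :
    Nat.card (homLiftsFrom P f a.1) = e a.1 := by
  obtain ⟨a, rfl⟩ := a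
  rw [← h.src_count a ⟨y, f⟩ hf]
  refine Nat.card_congr (Equiv.subtypeEquivRight fun s => ?_)
  rw [srcMap, Src.ext_iff_arrow, iff_and_self]
  rintro hs rfl
  exact hf ((Src.ext_iff_arrow _ _).2 (by simpa using hs.symm))

end Fibers

section Counting

open Cardinal

variable {D C : Type u} [SmallCategory D] [SmallCategory C] {P : D ⥤ C} {e : D → ℕ}

lemma card_ramifiedFiber_eq_card_fiber_of_ne_id (h : IsRamifiedCovering P e) {x y : C}
    {f : x ⟶ y} (hf : (⟨y, f⟩ : Src C x) ≠ ⟨x, 𝟙 x⟩) :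
    #(ramifiedFiber P e x) = #(fiber P y) := by
  -- `Nat.card` is `0` on infinite types; `1 ≤ e a` rules that out.
  have (a : fiber P x) : Finite (homLiftsFrom P f a.1) :=
    Nat.finite_of_card_ne_zero
      ((card_homLiftsFrom h hf a).trans_ne (Nat.one_le_iff_ne_zero.1 (h.one_le a.1)))
  calc #(ramifiedFiber P e x) = #(Σ a : fiber P x, homLiftsFrom P f a.1) :=
        mk_congr (Equiv.sigmaCongrRight fun a =>
          (Finite.equivFinOfCardEq (card_homLiftsFrom h hf a)).symm)
    _ = #(HomLift P f) := (mk_congr (HomLift.equivSigmaHomLiftsFrom f)).symm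
    _ = #(fiber P y) := mk_congr (Equiv.ofBijective _ (HomLift.target_bijective h.tgt_bij f))

lemma card_ramifiedFiber_eq_card_fiber_of_forall_eq_id (h : IsRamifiedCovering P e) {x : C}
    (hx : ∀ g : Src C x, g = ⟨x, 𝟙 x⟩) : #(ramifiedFiber P e x) = #(fiber P x) := by
  have he (a : fiber P x) : e a.1 = 1 := by
    obtain ⟨a, rfl⟩ := a
    exact h.ram_one a hx
  exact mk_congr ((Equiv.sigmaCongrRight fun a => finCongr (he a)).trans (Equiv.sigmaUnique _ _))

lemma card_ramifiedFiber_cod_eq_card_fiber (h : IsRamifiedCovering P e) {x y : C}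
    {f : x ⟶ y} (hf : (⟨y, f⟩ : Src C x) ≠ ⟨x, 𝟙 x⟩) :
    #(ramifiedFiber P e y) = #(fiber P y) := by
  by_cases hy : ∀ g : Src C y, g = ⟨y, 𝟙 y⟩
  · exact card_ramifiedFiber_eq_card_fiber_of_forall_eq_id h hy
  push Not at hy
  obtain ⟨⟨z, g⟩, hg⟩ := hy
  rw [card_ramifiedFiber_eq_card_fiber_of_ne_id h hg]
  by_cases hfg : (⟨z, f ≫ g⟩ : Src C x) = ⟨x, 𝟙 x⟩
  · obtain ⟨rfl, hfg⟩ := Sigma.mk.inj_iff.1 hfg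
    by_cases hgf : (⟨y, g ≫ f⟩ : Src C y) = ⟨y, 𝟙 y⟩
    · obtain ⟨-, hgf⟩ := Sigma.mk.inj_iff.1 hgf
      exact mk_congr (fiberEquivOfIso h.tgt_bij ⟨f, g, eq_of_heq hfg, eq_of_heq hgf⟩)
    · exact (card_ramifiedFiber_eq_card_fiber_of_ne_id h hg).symm.trans
        (card_ramifiedFiber_eq_card_fiber_of_ne_id h hgf)
  · exact (card_ramifiedFiber_eq_card_fiber_of_ne_id h hfg).symm.trans
      (card_ramifiedFiber_eq_card_fiber_of_ne_id h hf)

lemma card_ramifiedFiber_eq_of_hom (h : IsRamifiedCovering P e) {x y : C} (f : x ⟶ y) :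
    #(ramifiedFiber P e x) = #(ramifiedFiber P e y) := by
  by_cases hf : (⟨y, f⟩ : Src C x) = ⟨x, 𝟙 x⟩
  · obtain ⟨rfl, -⟩ := Sigma.mk.inj_iff.1 hf
    rfl
  · exact (card_ramifiedFiber_eq_card_fiber_of_ne_id h hf).trans
      (card_ramifiedFiber_cod_eq_card_fiber h hf).symm

end Counting

/-- For a ramified covering `P`, the cardinality of the multiset `R(x)`
of objects over `x`, each `xt` counted with multiplicity `e xt`, does not depend on the
object `x` of `C`: for any objects `x, y` there is a bijection `R(x) ≅ R(y)`. -/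
theorem ramifiedCovering_fiber_multiset_equiv {D C : Type u}
    [SmallCategory D] [SmallCategory C]
    (P : D ⥤ C) (e : D → ℕ) (h : IsRamifiedCovering P e) (x y : C) :
    Nonempty ((Σ a : {a : D // P.obj a = x}, Fin (e a.1)) ≃
      (Σ b : {b : D // P.obj b = y}, Fin (e b.1))) := by
  have : IsPreconnected C := zigzag_isPreconnected h.zigzag
  exact Cardinal.eq.1 <|
    constant_of_preserves_morphisms (fun z => Cardinal.mk (ramifiedFiber P e z))
      (fun _ _ f => card_ramifiedFiber_eq_of_hom h f) x y
end

section
/- Let P : C̃ → C together with ramification numbers e be a d-fold ramified covering of finite categories. Then for every n ≥ 1, #N̄_n(C̃) = d · #N̄_n(C). -/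
open CategoryTheory

universe u

/-- `P` is a `d`-fold ramified covering: for every object `x` of `C`, the multiset
`R(x)` of objects over `x`, each counted with multiplicity its ramification number,
has cardinality `d`, i.e. `Σ_{P xt = x} e(xt) = d`. -/
def IsDFold {D C : Type u} [SmallCategory D] [SmallCategory C]
    (P : D ⥤ C) (e : D → ℕ) (d : ℕ) : Prop :=
  ∀ x : C, Nat.card (Σ a : {a : D // P.obj a = x}, Fin (e a.1)) = d

/-!
A functor that is bijective on the morphisms into each object reflects identities and lifts
every chain uniquely once the last object of the lift is chosen. Hence the nondegenerate lifts of
a nondegenerate chain of length `n ≥ 1` correspond to the objects over its last object `y`, and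
that fibre has exactly `d` elements: the lifts of the last arrow `g : x ⟶ y` correspond to the
objects over `y` by lifting at the target, while counted at their sources they number
`Σ_{x̃ ↦ x} e(x̃) = d`.
-/

theorem Nat.card_sigma_eq_card_sigma_fin {α : Type*} {β : α → Type*} {e : α → ℕ}
    (h : ∀ a, Nat.card (β a) = e a) (he : ∀ a, e a ≠ 0) :
    Nat.card (Σ a, β a) = Nat.card (Σ a, Fin (e a)) :=
  Nat.card_congr <| .sigmaCongrRight fun a =>
    (Nat.equivFinOfCardPos (h a ▸ he a)).trans (finCongr (h a))

theorem Nat.card_eq_mul_card_of_card_fiber_eq {α β : Type*} {d : ℕ} (f : α → β)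
    (h : ∀ b, Nat.card {a // f a = b} = d) : Nat.card α = d * Nat.card β := by
  rcases eq_or_ne d 0 with rfl | hd
  · rw [zero_mul]
    by_contra hα
    have : Finite α := Nat.finite_of_card_ne_zero hα
    obtain ⟨a⟩ := (Nat.card_ne_zero.1 hα).1
    have : Nonempty {a' // f a' = f a} := ⟨⟨a, rfl⟩⟩
    exact Nat.card_pos.ne' (h (f a))
  · calc Nat.card α = Nat.card (Σ b, {a // f a = b}) :=
          Nat.card_congr (Equiv.sigmaFiberEquiv f).symm
      _ = Nat.card (β × Fin d) :=
        (Nat.card_sigma_eq_card_sigma_fin h fun _ => hd).trans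
          (Nat.card_congr (.sigmaEquivProd _ _))
      _ = d * Nat.card β := by rw [Nat.card_prod, Nat.card_fin, mul_comm]

theorem Src.mk_eqToHom_comp_eq_id_iff {C : Type u} [SmallCategory C] {a x y : C} (h : a = x)
    (g : x ⟶ y) : (⟨y, eqToHom h ≫ g⟩ : Src C a) = ⟨a, 𝟙 a⟩ ↔ (⟨y, g⟩ : Src C x) = ⟨x, 𝟙 x⟩ := by
  subst h; simp

theorem Chain.ext {C : Type u} [SmallCategory C] {n : ℕ} {c₁ c₂ : Chain C n}
    (hobj : ∀ i, c₁.obj i = c₂.obj i) (hmap : ∀ i, c₁.map i ≍ c₂.map i) : c₁ = c₂ := by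
  obtain ⟨o, m₁⟩ := c₁
  obtain ⟨_, m₂⟩ := c₂
  obtain rfl : o = _ := funext hobj
  congr
  exact funext fun i => eq_of_heq (hmap i)

section Lifting

variable {D C : Type u} [SmallCategory D] [SmallCategory C] {P : D ⥤ C}

theorem eq_and_heq_of_map_heq (hinj : ∀ x, Function.Injective (tgtMap P x)) {a₁ a₂ b₁ b₂ : D}
    (f₁ : a₁ ⟶ b₁) (f₂ : a₂ ⟶ b₂) (hb : b₁ = b₂) (ha : P.obj a₁ = P.obj a₂)
    (hf : P.map f₁ ≍ P.map f₂) : a₁ = a₂ ∧ f₁ ≍ f₂ := by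
  subst hb
  exact Sigma.mk.inj_iff.mp (hinj _ (Sigma.ext ha hf))

theorem map_src_eq_id_iff (hinj : ∀ x, Function.Injective (tgtMap P x)) {X Y : D} (f : X ⟶ Y) :
    (⟨P.obj Y, P.map f⟩ : Src C (P.obj X)) = ⟨P.obj X, 𝟙 _⟩ ↔ (⟨Y, f⟩ : Src D X) = ⟨X, 𝟙 X⟩ := by
  refine ⟨fun h => ?_, fun h => ?_⟩
  · obtain ⟨hY, hf⟩ := Sigma.mk.inj_iff.mp h
    obtain ⟨rfl, hf⟩ := eq_and_heq_of_map_heq hinj f (𝟙 Y) rfl hY.symm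
      (by rw [P.map_id]; exact hf.trans (congr_arg_heq (fun z => 𝟙 z) hY.symm))
    rw [eq_of_heq hf]
  · obtain ⟨rfl, hf⟩ := Sigma.mk.inj_iff.mp h
    rw [eq_of_heq hf, P.map_id]

theorem Chain.nonDeg_push_iff (hinj : ∀ x, Function.Injective (tgtMap P x)) {n : ℕ}
    {c : Chain D n} : (c.push P).NonDeg ↔ c.NonDeg :=
  forall_congr' fun i => not_congr (map_src_eq_id_iff hinj (c.map i))

theorem Chain.eq_of_push_eq_of_obj_last_eq (hinj : ∀ x, Function.Injective (tgtMap P x))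
    {n : ℕ} {c₁ c₂ : Chain D n} (hpush : c₁.push P = c₂.push P)
    (hlast : c₁.obj (Fin.last n) = c₂.obj (Fin.last n)) : c₁ = c₂ := by
  have hstep (i : Fin n) (h : c₁.obj i.succ = c₂.obj i.succ) :=
    eq_and_heq_of_map_heq hinj (c₁.map i) (c₂.map i) h
      (congrArg (fun c => c.obj i.castSucc) hpush) (congr_arg_heq (fun c => c.map i) hpush)
  have hobj : ∀ i, c₁.obj i = c₂.obj i := Fin.reverseInduction hlast fun i h => (hstep i h).1
  exact Chain.ext hobj fun i => (hstep i (hobj i.succ)).2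

noncomputable def liftArrow (hsurj : ∀ x, Function.Surjective (tgtMap P x)) (b : D)
    (t : Tgt C (P.obj b)) : Tgt D b :=
  Function.surjInv (hsurj b) t

theorem tgtMap_liftArrow (hsurj : ∀ x, Function.Surjective (tgtMap P x)) (b : D)
    (t : Tgt C (P.obj b)) : tgtMap P b (liftArrow hsurj b t) = t :=
  Function.surjInv_eq (hsurj b) t

theorem obj_liftArrow_fst (hsurj : ∀ x, Function.Surjective (tgtMap P x)) (b : D)
    (t : Tgt C (P.obj b)) : P.obj (liftArrow hsurj b t).1 = t.1 :=
  congrArg Sigma.fst (tgtMap_liftArrow hsurj b t)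

theorem map_liftArrow_snd_heq (hsurj : ∀ x, Function.Surjective (tgtMap P x)) (b : D)
    (t : Tgt C (P.obj b)) : P.map (liftArrow hsurj b t).2 ≍ t.2 :=
  (Sigma.mk.inj_iff.mp (tgtMap_liftArrow hsurj b t)).2

namespace Chain

variable (hsurj : ∀ x, Function.Surjective (tgtMap P x)) {n : ℕ} (c : Chain C n) (y : D)
  (hy : P.obj y = c.obj (Fin.last n))

noncomputable def liftObj : ∀ i : Fin (n + 1), {a : D // P.obj a = c.obj i} :=
  Fin.reverseInduction ⟨y, hy⟩ fun i b =>
    ⟨_, obj_liftArrow_fst hsurj b.1 ⟨c.obj i.castSucc, c.map i ≫ eqToHom b.2.symm⟩⟩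

noncomputable def liftArrowAt (i : Fin n) : Tgt D (liftObj hsurj c y hy i.succ).1 :=
  liftArrow hsurj _ ⟨c.obj i.castSucc, c.map i ≫ eqToHom (liftObj hsurj c y hy i.succ).2.symm⟩

theorem liftObj_castSucc (i : Fin n) :
    (liftObj hsurj c y hy i.castSucc).1 = (liftArrowAt hsurj c y hy i).1 :=
  congrArg Subtype.val
    (Fin.reverseInduction_castSucc (motive := fun i => {a : D // P.obj a = c.obj i}) ..)

noncomputable def lift : Chain D n where
  obj i := (liftObj hsurj c y hy i).1
  map i := eqToHom (liftObj_castSucc hsurj c y hy i) ≫ (liftArrowAt hsurj c y hy i).2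

theorem lift_obj_last : (lift hsurj c y hy).obj (Fin.last n) = y :=
  congrArg Subtype.val
    (Fin.reverseInduction_last (motive := fun i => {a : D // P.obj a = c.obj i}) ..)

theorem push_lift : (lift hsurj c y hy).push P = c :=
  Chain.ext (fun i => (liftObj hsurj c y hy i).2) fun i => by
    dsimp only [push, lift]
    rw [Functor.map_comp, eqToHom_map, eqToHom_comp_heq_iff]
    exact (map_liftArrow_snd_heq hsurj _ _).trans (comp_eqToHom_heq _ _)

end Chain

noncomputable def Chain.liftsEquivFiber (hbij : ∀ x, Function.Bijective (tgtMap P x)) {n : ℕ}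
    (c : Chain C n) :
    {ct : Chain D n // ct.push P = c} ≃ {y : D // P.obj y = c.obj (Fin.last n)} :=
  .ofBijective (fun ct => ⟨ct.1.obj (Fin.last n), congrArg (·.obj (Fin.last n)) ct.2⟩)
    ⟨fun ct₁ ct₂ h => Subtype.ext <| eq_of_push_eq_of_obj_last_eq (fun x => (hbij x).1)
        (ct₁.2.trans ct₂.2.symm) (congrArg Subtype.val h),
      fun y => ⟨⟨_, push_lift (fun x => (hbij x).2) c y.1 y.2⟩,
        Subtype.ext (lift_obj_last (fun x => (hbij x).2) c y.1 y.2)⟩⟩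

def Chain.nonDegLiftsEquiv (hinj : ∀ x, Function.Injective (tgtMap P x)) {n : ℕ}
    (c : {c : Chain C n // c.NonDeg}) :
    {ct // Subtype.map (Chain.push P) (fun _ => (nonDeg_push_iff hinj).2) ct = c} ≃
      {ct : Chain D n // ct.push P = c.1} where
  toFun ct := ⟨ct.1.1, congrArg Subtype.val ct.2⟩
  invFun ct := ⟨⟨ct.1, (nonDeg_push_iff hinj).1 (by rw [ct.2]; exact c.2)⟩, Subtype.ext ct.2⟩

def ArrowLifts (P : D ⥤ C) {x y : C} (g : x ⟶ y) : Type u :=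
  Σ a : {a : D // P.obj a = x}, {s : Src D a.1 //
    s ≠ ⟨a.1, 𝟙 a.1⟩ ∧ srcMap P a.1 s = ⟨y, eqToHom a.2 ≫ g⟩}

theorem card_arrowLifts_eq_card_fiber (hbij : ∀ x, Function.Bijective (tgtMap P x)) {x y : C}
    (g : x ⟶ y) (hg : (⟨y, g⟩ : Src C x) ≠ ⟨x, 𝟙 x⟩) :
    Nat.card (ArrowLifts P g) = Nat.card {b : D // P.obj b = y} := by
  refine Nat.card_eq_of_bijective (fun s => ⟨s.2.1.1, congrArg Sigma.fst s.2.2.2⟩) ⟨?_, ?_⟩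
  · rintro ⟨⟨a₁, ha₁⟩, ⟨b₁, f₁⟩, _, hs₁⟩ ⟨⟨a₂, ha₂⟩, ⟨b₂, f₂⟩, _, hs₂⟩ hb
    obtain rfl : b₁ = b₂ := congrArg Subtype.val hb
    obtain ⟨rfl, hf⟩ := eq_and_heq_of_map_heq (fun x => (hbij x).1) f₁ f₂ rfl
      (ha₁.trans ha₂.symm) ((Sigma.mk.inj_iff.mp hs₁).2.trans
        ((eqToHom_comp_heq _ _).trans (eqToHom_comp_heq _ _).symm)
        |>.trans (Sigma.mk.inj_iff.mp hs₂).2.symm)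
    obtain rfl := eq_of_heq hf
    rfl
  · rintro ⟨b, hb⟩
    have hsurj x := (hbij x).2
    set t := liftArrow hsurj b ⟨x, g ≫ eqToHom hb.symm⟩
    have ha : P.obj t.1 = x := obj_liftArrow_fst hsurj _ _
    have himg : srcMap P t.1 ⟨b, t.2⟩ = ⟨y, eqToHom ha ≫ g⟩ :=
      Sigma.ext hb <| (map_liftArrow_snd_heq hsurj _ _).trans <|
        (comp_eqToHom_heq _ _).trans (eqToHom_comp_heq _ _).symm
    refine ⟨⟨⟨t.1, ha⟩, ⟨b, t.2⟩, fun hs => hg ?_, himg⟩, rfl⟩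
    rw [← Src.mk_eqToHom_comp_eq_id_iff ha, ← himg, hs]
    simp [srcMap]

end Lifting

namespace IsRamifiedCovering

variable {D C : Type u} [SmallCategory D] [SmallCategory C] {P : D ⥤ C} {e : D → ℕ} {d : ℕ}

theorem card_fiber_eq_of_ne_id (h : IsRamifiedCovering P e) (hd : IsDFold P e d) {x y : C}
    (g : x ⟶ y) (hg : (⟨y, g⟩ : Src C x) ≠ ⟨x, 𝟙 x⟩) : Nat.card {b : D // P.obj b = y} = d :=
  calc Nat.card {b : D // P.obj b = y}
      _ = Nat.card (ArrowLifts P g) := (card_arrowLifts_eq_card_fiber h.tgt_bij g hg).symm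
      _ = Nat.card (Σ a : {a : D // P.obj a = x}, Fin (e a.1)) :=
        Nat.card_sigma_eq_card_sigma_fin
          (fun a => h.src_count a.1 _ ((Src.mk_eqToHom_comp_eq_id_iff a.2 g).not.2 hg))
          (fun a => Nat.one_le_iff_ne_zero.1 (h.one_le a.1))
      _ = d := hd x

theorem card_lifts_of_nonDeg (h : IsRamifiedCovering P e) (hd : IsDFold P e d) {m : ℕ}
    {c : Chain C (m + 1)} (hc : c.NonDeg) :
    Nat.card {ct : Chain D (m + 1) // ct.push P = c} = d :=
  (Nat.card_congr (Chain.liftsEquivFiber h.tgt_bij c)).trans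
    (h.card_fiber_eq_of_ne_id hd (c.map (Fin.last m)) (hc (Fin.last m)))

end IsRamifiedCovering

/-- For a `d`-fold ramified covering of finite categories and `n ≥ 1`,
`#N̄_n(C̃) = d · #N̄_n(C)`. -/
theorem ramifiedCovering_card_nonDeg_chains {D C : Type u}
    [SmallCategory D] [SmallCategory C]
    [Fintype D] [Fintype C] [∀ a b : D, Finite (a ⟶ b)] [∀ a b : C, Finite (a ⟶ b)]
    (P : D ⥤ C) (e : D → ℕ) (d : ℕ)
    (h : IsRamifiedCovering P e) (hd : IsDFold P e d) (n : ℕ) (hn : 1 ≤ n) :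
    Nat.card {c : Chain D n // c.NonDeg} = d * Nat.card {c : Chain C n // c.NonDeg} := by
  obtain ⟨m, rfl⟩ : ∃ m, n = m + 1 := ⟨n - 1, by omega⟩
  have hinj x := (h.tgt_bij x).1
  refine Nat.card_eq_mul_card_of_card_fiber_eq
    (Subtype.map (Chain.push P) fun _ => (Chain.nonDeg_push_iff hinj).2) fun c => ?_
  rw [Nat.card_congr (Chain.nonDegLiftsEquiv hinj c)]
  exact h.card_lifts_of_nonDeg hd c.2
end

section
/- Let P : C̃ → C together with ramification numbers e be a d-fold ramified covering of finite categories, and let χ_C(t) = Σ_{n≥0} #N̄_n(C) tⁿ ∈ ℤ⟦t⟧ and similarly χ_{C̃}(t). Then as formal power series, χ_{C̃}(t) = d·χ_C(t) − d·#Ob(C) + #Ob(C̃); equivalently, χ_{C̃}(t) = d·χ_C(t) − V where V = Σ_{x̃ ∈ Ob(C̃)} (e(x̃) − 1). -/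
open CategoryTheory

universe u

/-!
Splitting off the last morphism, a non-degenerate `(m+1)`-chain is a non-degenerate `m`-chain
ending at some `y` followed by a non-identity morphism out of `y`, so
`#N̄_{m+1} = Σ_y t_m(y) · #S̄(y)`, where `t_m(y)` counts the non-degenerate `m`-chains ending
at `y`. Since `P` is bijective on `T(x̃)`, it detects identities, and splitting off the last
morphism into `x̃` shows `t_m(x̃) = t_m(P x̃)` by induction on `m`; condition (ii) gives
`#S̄(x̃) = e(x̃) · #S̄(P x̃)`. Summing over the fibres of `P`, whose ramification numbers add up
to `d`, yields `#N̄_{m+1}(C̃) = d · #N̄_{m+1}(C)`, so the two series differ only in their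
constant terms `#Ob(C̃)` and `d · #Ob(C)`.
-/

section Identities

variable {A : Type u} [SmallCategory A]

def IsId {x y : A} (f : x ⟶ y) : Prop := ∃ h : x = y, f = eqToHom h

lemma src_mk_eq_id_iff_s9 {x y : A} (f : x ⟶ y) :
    (⟨y, f⟩ : Src A x) = ⟨x, 𝟙 x⟩ ↔ IsId f := by
  constructor
  · intro h
    obtain ⟨rfl, h⟩ := Sigma.mk.inj_iff.mp h
    exact ⟨rfl, eq_of_heq h⟩
  · rintro ⟨rfl, rfl⟩
    rfl

lemma tgt_mk_eq_id_iff {x y : A} (f : x ⟶ y) :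
    (⟨x, f⟩ : Tgt A y) = ⟨y, 𝟙 y⟩ ↔ IsId f := by
  constructor
  · intro h
    obtain ⟨rfl, h⟩ := Sigma.mk.inj_iff.mp h
    exact ⟨rfl, eq_of_heq h⟩
  · rintro ⟨rfl, rfl⟩
    rfl

@[simp]
lemma isId_eqToHom_comp_iff {x x' y : A} (h : x' = x) (f : x ⟶ y) :
    IsId (eqToHom h ≫ f) ↔ IsId f := by
  subst h; simp

@[simp]
lemma isId_comp_eqToHom_iff {x y y' : A} (h : y = y') (f : x ⟶ y) :
    IsId (f ≫ eqToHom h) ↔ IsId f := by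
  subst h; simp

end Identities

namespace Chain

variable {A : Type u} [SmallCategory A] {n : ℕ}

lemma nonDeg_iff (c : Chain A n) : c.NonDeg ↔ ∀ i, ¬ IsId (c.map i) :=
  forall_congr' fun _ => not_congr (src_mk_eq_id_iff_s9 _)

lemma ext_eqToHom {c c' : Chain A n} (hobj : ∀ i, c.obj i = c'.obj i)
    (hmap : ∀ i, c.map i = eqToHom (hobj _) ≫ c'.map i ≫ eqToHom (hobj _).symm) :
    c = c' := by
  obtain ⟨o, m⟩ := c
  obtain ⟨o', m'⟩ := c'
  obtain rfl : o = o' := funext hobj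
  simp only [mk.injEq, heq_eq_eq, true_and]
  funext i
  simpa using hmap i

instance [Finite A] [∀ a b : A, Finite (a ⟶ b)] : Finite (Chain A n) :=
  Finite.of_injective (fun c : Chain A n => (⟨c.obj, c.map⟩ :
      Σ o : Fin (n + 1) → A, ∀ i : Fin n, o i.castSucc ⟶ o i.succ)) <| by
    rintro ⟨o, m⟩ ⟨o', m'⟩ h
    obtain ⟨rfl, h⟩ := Sigma.mk.inj_iff.mp h
    simpa using h

def init (c : Chain A (n + 1)) : Chain A n where
  obj i := c.obj i.castSucc
  map i := c.map i.castSucc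

def snoc (c : Chain A n) {y : A} (f : c.obj (Fin.last n) ⟶ y) : Chain A (n + 1) where
  obj := Fin.snoc c.obj y
  map := Fin.lastCases (eqToHom (by simp) ≫ f ≫ eqToHom (by simp))
    fun j => eqToHom (by simp) ≫ c.map j ≫
      eqToHom (by simp [-Fin.castSucc_succ, Fin.succ_castSucc])

@[simp]
lemma snoc_obj_castSucc (c : Chain A n) {y : A} (f : c.obj (Fin.last n) ⟶ y) (i : Fin (n + 1)) :
    (c.snoc f).obj i.castSucc = c.obj i := by
  simp [snoc]

@[simp]
lemma snoc_obj_last (c : Chain A n) {y : A} (f : c.obj (Fin.last n) ⟶ y) :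
    (c.snoc f).obj (Fin.last (n + 1)) = y := by
  simp [snoc]

lemma snoc_map_castSucc (c : Chain A n) {y : A} (f : c.obj (Fin.last n) ⟶ y) (j : Fin n) :
    (c.snoc f).map j.castSucc =
      eqToHom (by simp) ≫ c.map j ≫
        eqToHom (by simp [-Fin.castSucc_succ, Fin.succ_castSucc]) := by
  simp [snoc]

lemma snoc_map_last (c : Chain A n) {y : A} (f : c.obj (Fin.last n) ⟶ y) :
    (c.snoc f).map (Fin.last n) = eqToHom (by simp) ≫ f ≫ eqToHom (by simp) := by
  simp [snoc]

lemma init_snoc (c : Chain A n) {y : A} (f : c.obj (Fin.last n) ⟶ y) : (c.snoc f).init = c :=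
  ext_eqToHom (fun _ => by simp [init]) fun _ => by simp [init, snoc_map_castSucc]

lemma snoc_init (c : Chain A (n + 1)) : c.init.snoc (c.map (Fin.last n)) = c := by
  refine ext_eqToHom (fun i => ?_) fun i => ?_
  · induction i using Fin.lastCases <;> simp [snoc, init]
  · induction i using Fin.lastCases with
    | last => erw [snoc_map_last]; simp [init]
    | cast j => erw [snoc_map_castSucc]; simp [init]

lemma NonDeg.init {c : Chain A (n + 1)} (hc : c.NonDeg) : c.init.NonDeg :=
  fun i => hc i.castSucc

lemma NonDeg.snoc {c : Chain A n} (hc : c.NonDeg) {y : A} {f : c.obj (Fin.last n) ⟶ y}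
    (hf : ¬ IsId f) : (c.snoc f).NonDeg := by
  rw [nonDeg_iff] at hc ⊢
  intro i
  induction i using Fin.lastCases with
  | last => simpa [snoc_map_last] using hf
  | cast j => simpa [snoc_map_castSucc] using hc j

end Chain

abbrev NonDegChain (A : Type u) [SmallCategory A] (n : ℕ) : Type u :=
  {c : Chain A n // c.NonDeg}

namespace NonDegChain

variable {A : Type u} [SmallCategory A] {n : ℕ}

lemma sigma_ext {x : A} {c c' : NonDegChain A n} (h : c = c') {f : c.1.obj (Fin.last n) ⟶ x}
    {f' : c'.1.obj (Fin.last n) ⟶ x} {hf : ¬ IsId f} {hf' : ¬ IsId f'}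
    (hff' : f = eqToHom (by rw [h]) ≫ f') :
    (⟨c, f, hf⟩ : Σ c : NonDegChain A n, {f : c.1.obj (Fin.last n) ⟶ x // ¬ IsId f}) =
      ⟨c', f', hf'⟩ := by
  subst h
  obtain rfl : f = f' := by simpa using hff'
  rfl

def snocEquiv (x : A) :
    {c : NonDegChain A (n + 1) // c.1.obj (Fin.last (n + 1)) = x} ≃
      Σ c : NonDegChain A n, {f : c.1.obj (Fin.last n) ⟶ x // ¬ IsId f} where
  toFun c := ⟨⟨c.1.1.init, c.1.2.init⟩, c.1.1.map (Fin.last n) ≫ eqToHom c.2,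
    (isId_comp_eqToHom_iff _ _).not.mpr ((Chain.nonDeg_iff _).mp c.1.2 (Fin.last n))⟩
  invFun p := ⟨⟨p.1.1.snoc p.2.1, p.1.2.snoc p.2.2⟩, Chain.snoc_obj_last _ _⟩
  left_inv := by
    rintro ⟨⟨c, hc⟩, rfl⟩
    apply Subtype.ext; apply Subtype.ext
    dsimp only
    erw [eqToHom_refl, Category.comp_id]
    exact c.snoc_init
  right_inv := by
    rintro ⟨⟨c, hc⟩, f, hf⟩
    refine sigma_ext (Subtype.ext (c.init_snoc f)) ?_
    erw [Chain.snoc_map_last, Category.assoc, Category.assoc, eqToHom_trans, eqToHom_refl,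
      Category.comp_id]
    rfl

end NonDegChain

lemma Nat.card_sigma_comp {α β : Type*} [Finite α] [Fintype β] (f : α → β) (F : β → Type*)
    [∀ b, Finite (F b)] :
    Nat.card (Σ a, F (f a)) = ∑ b, Nat.card {a // f a = b} * Nat.card (F b) := by
  have sigmaEquiv : (Σ a, F (f a)) ≃ Σ b, {a // f a = b} × F b :=
    { toFun p := ⟨f p.1, ⟨p.1, rfl⟩, p.2⟩
      invFun q := ⟨q.2.1.1, cast (congrArg F q.2.1.2).symm q.2.2⟩
      left_inv _ := rfl
      right_inv := by rintro ⟨b, ⟨a, rfl⟩, x⟩; rfl }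
  simp [Nat.card_congr sigmaEquiv, Nat.card_sigma, Nat.card_prod]

lemma Nat.card_eq_mul_of_card_fiber_eq {α β : Type*} [Finite α] [Finite β] (f : α → β)
    {k : ℕ} (hk : ∀ b, Nat.card {a // f a = b} = k) : Nat.card α = Nat.card β * k := by
  have := Fintype.ofFinite β
  rw [← Nat.card_congr (Equiv.sigmaFiberEquiv f), Nat.card_sigma]
  simp [hk, Nat.card_eq_fintype_card]

section Counting

variable (A : Type u) [SmallCategory A]

noncomputable def nonIdHomCount (y x : A) : ℕ := Nat.card {f : y ⟶ x // ¬ IsId f}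

noncomputable def nonIdSrcCount (y : A) : ℕ := Nat.card {g : Src A y // g ≠ ⟨y, 𝟙 y⟩}

noncomputable def nonDegChainCount (m : ℕ) (x : A) : ℕ :=
  Nat.card {c : NonDegChain A m // c.1.obj (Fin.last m) = x}

variable {A}

lemma nonDegChainCount_zero (x : A) : nonDegChainCount A 0 x = 1 := by
  rw [nonDegChainCount, Nat.card_eq_one_iff_unique]
  refine ⟨⟨fun ⟨c, hc⟩ ⟨c', hc'⟩ => ?_⟩, ⟨⟨⟨fun _ => x, Fin.elim0⟩, fun i => i.elim0⟩, rfl⟩⟩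
  refine Subtype.ext <| Subtype.ext <| Chain.ext_eqToHom (fun i => ?_) fun i => i.elim0
  rw [Subsingleton.elim (α := Fin 1) i (Fin.last 0), hc, hc']

variable [Fintype A] [∀ a b : A, Finite (a ⟶ b)]

lemma nonIdSrcCount_eq_sum (y : A) : nonIdSrcCount A y = ∑ x, nonIdHomCount A y x := by
  refine (Nat.card_congr ?_).trans Nat.card_sigma
  exact
    { toFun g := ⟨g.1.1, g.1.2, fun hf => g.2 ((src_mk_eq_id_iff_s9 _).mpr hf)⟩
      invFun g := ⟨⟨g.1, g.2.1⟩, fun hg => g.2.2 ((src_mk_eq_id_iff_s9 _).mp hg)⟩ }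

lemma card_sigma_nonIdTgt (x : A) (k : A → ℕ) :
    Nat.card (Σ g : {g : Tgt A x // g ≠ ⟨x, 𝟙 x⟩}, Fin (k g.1.1)) =
      ∑ y, k y * nonIdHomCount A y x := by
  refine (Nat.card_sigma_comp (fun g : {g : Tgt A x // g ≠ ⟨x, 𝟙 x⟩} => g.1.1)
    (fun y => Fin (k y))).trans <| Finset.sum_congr rfl fun y _ => ?_
  rw [Nat.card_fin, mul_comm, nonIdHomCount]
  congr 1
  refine Nat.card_congr ?_
  exact
    { toFun g := ⟨eqToHom g.2.symm ≫ g.1.1.2, by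
        obtain ⟨⟨⟨z, f⟩, hf⟩, rfl⟩ := g
        simpa [← tgt_mk_eq_id_iff] using hf⟩
      invFun f := ⟨⟨⟨y, f.1⟩, fun hf' => f.2 ((tgt_mk_eq_id_iff _).mp hf')⟩, rfl⟩
      left_inv := by rintro ⟨⟨⟨z, f⟩, hf⟩, rfl⟩; simp
      right_inv _ := by simp }

lemma card_nonDegChain_eq_sum (m : ℕ) :
    Nat.card (NonDegChain A m) = ∑ x, nonDegChainCount A m x :=
  (Nat.card_congr (Equiv.sigmaFiberEquiv _).symm).trans Nat.card_sigma

lemma card_nonDegChain_zero : Nat.card (NonDegChain A 0) = Fintype.card A := by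
  simp [card_nonDegChain_eq_sum, nonDegChainCount_zero]

lemma nonDegChainCount_succ (m : ℕ) (x : A) :
    nonDegChainCount A (m + 1) x = ∑ y, nonDegChainCount A m y * nonIdHomCount A y x :=
  (Nat.card_congr (NonDegChain.snocEquiv x)).trans <|
    Nat.card_sigma_comp _ fun y => {f : y ⟶ x // ¬ IsId f}

lemma card_nonDegChain_succ (m : ℕ) :
    Nat.card (NonDegChain A (m + 1)) = ∑ y, nonDegChainCount A m y * nonIdSrcCount A y := by
  simp_rw [card_nonDegChain_eq_sum, nonDegChainCount_succ, nonIdSrcCount_eq_sum, Finset.mul_sum]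
  exact Finset.sum_comm

end Counting

section Covering

variable {D C : Type u} [SmallCategory D] [SmallCategory C] {P : D ⥤ C} {e : D → ℕ}

namespace IsRamifiedCovering

lemma isId_map_iff (h : IsRamifiedCovering P e) {a b : D} (f : a ⟶ b) :
    IsId (P.map f) ↔ IsId f := by
  refine ⟨fun hf => ?_, fun ⟨hab, hf⟩ => ⟨congrArg P.obj hab, by subst hab hf; simp⟩⟩
  rw [← tgt_mk_eq_id_iff] at hf ⊢
  exact (h.tgt_bij b).1 (hf.trans (by simp [tgtMap]))

lemma srcMap_ne_id (h : IsRamifiedCovering P e) {x : D} {s : Src D x} (hs : s ≠ ⟨x, 𝟙 x⟩) :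
    srcMap P x s ≠ ⟨P.obj x, 𝟙 (P.obj x)⟩ := by
  obtain ⟨b, f⟩ := s
  rw [srcMap, Ne, src_mk_eq_id_iff_s9, h.isId_map_iff, ← src_mk_eq_id_iff_s9]
  exact hs

noncomputable def nonIdTgtEquiv (h : IsRamifiedCovering P e) (x : D) :
    {g : Tgt D x // g ≠ ⟨x, 𝟙 x⟩} ≃ {g : Tgt C (P.obj x) // g ≠ ⟨P.obj x, 𝟙 (P.obj x)⟩} :=
  (Equiv.ofBijective _ (h.tgt_bij x)).subtypeEquiv fun _ =>
    ((h.tgt_bij x).1.ne_iff' (by simp [tgtMap])).symm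

end IsRamifiedCovering

variable [Fintype D] [Fintype C]

lemma IsDFold.sum_mul_comp {d : ℕ} (hd : IsDFold P e d) (g : C → ℕ) :
    ∑ a, e a * g (P.obj a) = d * ∑ x, g x := by
  classical
  rw [← Fintype.sum_fiberwise P.obj, Finset.mul_sum]
  refine Finset.sum_congr rfl fun x _ => ?_
  have hfiber : ∑ a : {a // P.obj a = x}, e a = d := by
    rw [← hd x, Nat.card_sigma]
    simp
  calc ∑ a : {a // P.obj a = x}, e a * g (P.obj a)
      = ∑ a : {a // P.obj a = x}, e a * g x := Finset.sum_congr rfl fun a _ => by rw [a.2]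
    _ = d * g x := by rw [← Finset.sum_mul, hfiber]

variable [∀ a b : D, Finite (a ⟶ b)] [∀ a b : C, Finite (a ⟶ b)]

namespace IsRamifiedCovering

lemma nonDegChainCount_obj (h : IsRamifiedCovering P e) (m : ℕ) (x : D) :
    nonDegChainCount D m x = nonDegChainCount C m (P.obj x) := by
  induction m generalizing x with
  | zero => rw [nonDegChainCount_zero, nonDegChainCount_zero]
  | succ m ih =>
    simp_rw [nonDegChainCount_succ, ih, ← card_sigma_nonIdTgt]
    exact Nat.card_congr (Equiv.sigmaCongrLeft (h.nonIdTgtEquiv x)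
      (β := fun g => Fin (nonDegChainCount C m g.1.1)))

lemma nonIdSrcCount_eq_mul (h : IsRamifiedCovering P e) (x : D) :
    nonIdSrcCount D x = nonIdSrcCount C (P.obj x) * e x :=
  Nat.card_eq_mul_of_card_fiber_eq (fun s => ⟨srcMap P x s.1, h.srcMap_ne_id s.2⟩) fun g =>
    (Nat.card_congr
      { toFun s := ⟨s.1.1, s.1.2, congrArg Subtype.val s.2⟩
        invFun s := ⟨⟨s.1, s.2.1⟩, Subtype.ext s.2.2⟩ }).trans (h.src_count x g.1 g.2)

lemma card_nonDegChain_succ_eq_mul {d : ℕ} (h : IsRamifiedCovering P e) (hd : IsDFold P e d)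
    (m : ℕ) : Nat.card (NonDegChain D (m + 1)) = d * Nat.card (NonDegChain C (m + 1)) := by
  rw [_root_.card_nonDegChain_succ, _root_.card_nonDegChain_succ, ← hd.sum_mul_comp]
  refine Finset.sum_congr rfl fun x _ => ?_
  rw [h.nonDegChainCount_obj, h.nonIdSrcCount_eq_mul]
  ring

end IsRamifiedCovering

end Covering

/-- For a `d`-fold ramified covering of finite categories, the power
series `χ_{C̃}(t) = Σₙ #N̄_n(C̃) tⁿ` satisfies
`χ_{C̃}(t) = d·χ_C(t) − d·#Ob(C) + #Ob(C̃)`, and `d·#Ob(C) − #Ob(C̃)` equals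
`V = Σ_{xt ∈ Ob(C̃)} (e(xt) − 1)`, so that `χ_{C̃}(t) = d·χ_C(t) − V`. -/
theorem ramifiedCovering_chain_power_series {D C : Type u}
    [SmallCategory D] [SmallCategory C]
    [Fintype D] [Fintype C] [∀ a b : D, Finite (a ⟶ b)] [∀ a b : C, Finite (a ⟶ b)]
    (P : D ⥤ C) (e : D → ℕ) (d : ℕ)
    (h : IsRamifiedCovering P e) (hd : IsDFold P e d) :
    (PowerSeries.mk (fun n => (Nat.card {c : Chain D n // c.NonDeg} : ℤ)) =
      PowerSeries.C (R := ℤ) d * PowerSeries.mk (fun n => (Nat.card {c : Chain C n // c.NonDeg} : ℤ))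
        - PowerSeries.C (R := ℤ) (d * Fintype.card C) + PowerSeries.C (R := ℤ) (Fintype.card D)) ∧
    ((d * Fintype.card C - Fintype.card D : ℤ) = ∑ a : D, ((e a : ℤ) - 1)) := by
  have sum_e : ∑ a, e a = d * Fintype.card C := by
    simpa using hd.sum_mul_comp fun _ => 1
  refine ⟨PowerSeries.ext fun n => ?_, ?_⟩
  · rw [map_add, map_sub, PowerSeries.coeff_C_mul, PowerSeries.coeff_mk, PowerSeries.coeff_mk,
      PowerSeries.coeff_C, PowerSeries.coeff_C]
    rcases n with _ | m
    · simp [card_nonDegChain_zero]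
    · simp [h.card_nonDegChain_succ_eq_mul hd m]
  · rw [Finset.sum_sub_distrib, ← Nat.cast_sum, sum_e]
    simp
end

section
/- Let P : C̃ → C together with ramification numbers e be a d-fold ramified covering of small categories, and let n ≥ 1. Then every chain f = (x₀ → x₁ → ⋯ → x_n) in N_n(C) which is not a constant identity chain (i.e., not all morphisms of f are identities on a single object) has exactly d preimages in N_n(C̃) under the map induced by P. -/
open CategoryTheory

universe u

/-!
Since `P` is bijective on morphisms into each object, a chain lifts backwards from any point
over its last object `xₙ`, and the lift is determined by that point; so the lifts of a chain are
counted by the fiber over `xₙ`. If the chain is not constant, `xₙ` is the target of a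
non-identity morphism `f : x ⟶ xₙ`. Counting the non-identity lifts of `f` by their sources gives
`Σ_{P a = x} e(a) = d`, and counting them by their targets gives the size of the fiber over `xₙ`.
-/

namespace Chain

variable {C : Type u} [SmallCategory C] {n : ℕ}

lemma ext' {c₁ c₂ : Chain C n} (ho : ∀ i, c₁.obj i = c₂.obj i)
    (hm : ∀ i, HEq (c₁.map i) (c₂.map i)) : c₁ = c₂ := by
  obtain ⟨o₁, m₁⟩ := c₁
  obtain ⟨o₂, m₂⟩ := c₂
  obtain rfl : o₁ = o₂ := funext ho
  simp only [Chain.mk.injEq, heq_eq_eq, true_and]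
  exact funext fun i => eq_of_heq (hm i)

-- Phrased in `Src`, as in `IsRamifiedCovering.src_count`, so that `¬c.IsIdAt i` feeds it.
def IsIdAt (c : Chain C n) (i : Fin n) : Prop :=
  (⟨c.obj i.succ, c.map i⟩ : Src C (c.obj i.castSucc)) = ⟨c.obj i.castSucc, 𝟙 _⟩

lemma obj_eq_obj_last_of_isIdAt (c : Chain C n) (i : Fin (n + 1))
    (h : ∀ k : Fin n, i ≤ k.castSucc → c.IsIdAt k) : c.obj i = c.obj (Fin.last n) := by
  induction i using Fin.reverseInduction with
  | last => rfl
  | cast i ih =>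
    calc c.obj i.castSucc = c.obj i.succ := (congrArg Sigma.fst (h i le_rfl)).symm
      _ = c.obj (Fin.last n) := ih fun k hk => h k (Fin.castSucc_lt_succ.le.trans hk)

lemma eq_const_of_forall_isIdAt (c : Chain C n) (h : ∀ k, c.IsIdAt k) :
    c = Chain.const C (c.obj (Fin.last n)) n := by
  have hobj : ∀ i, c.obj i = c.obj (Fin.last n) := fun i =>
    c.obj_eq_obj_last_of_isIdAt i fun k _ => h k
  refine ext' hobj fun k => (Sigma.ext_iff.mp (h k)).2.trans ?_
  rw [hobj k.castSucc]
  rfl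

/-- The last non-identity morphism of a non-constant chain ends at its last object. -/
lemma exists_not_isIdAt_obj_succ_eq_last (c : Chain C n) (hc : ∀ x, c ≠ Chain.const C x n) :
    ∃ j, ¬c.IsIdAt j ∧ c.obj j.succ = c.obj (Fin.last n) := by
  classical
  by_cases hex : ∃ j, ¬c.IsIdAt j
  · set s := Finset.univ.filter fun j => ¬c.IsIdAt j
    obtain ⟨j₀, hj₀⟩ := hex
    have hs : s.Nonempty := ⟨j₀, by simpa [s] using hj₀⟩
    refine ⟨s.max' hs, (Finset.mem_filter.mp (s.max'_mem hs)).2,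
      c.obj_eq_obj_last_of_isIdAt _ fun k hk => ?_⟩
    by_contra hk'
    exact (Fin.succ_le_castSucc_iff.mp hk).not_ge (s.le_max' k (by simpa [s] using hk'))
  · exact absurd (c.eq_const_of_forall_isIdAt (not_exists_not.mp hex)) (hc _)

end Chain

section Lifting

variable {D C : Type u} [SmallCategory D] [SmallCategory C] {P : D ⥤ C}

lemma eq_and_heq_of_tgtMap_injective (hP : ∀ x, Function.Injective (tgtMap P x))
    {a₁ a₂ b₁ b₂ : D} (g₁ : a₁ ⟶ b₁) (g₂ : a₂ ⟶ b₂) (hb : b₁ = b₂)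
    (hpa : P.obj a₁ = P.obj a₂) (hpg : HEq (P.map g₁) (P.map g₂)) :
    a₁ = a₂ ∧ HEq g₁ g₂ := by
  subst hb
  exact Sigma.ext_iff.mp (hP b₁ (Sigma.ext hpa hpg : tgtMap P b₁ ⟨a₁, g₁⟩ = tgtMap P b₁ ⟨a₂, g₂⟩))

lemma Chain.exists_push_eq_of_tgtMap_surjective (hP : ∀ x, Function.Surjective (tgtMap P x))
    {n : ℕ} (c : Chain C n) (a : D) (ha : P.obj a = c.obj (Fin.last n)) :
    ∃ c' : Chain D n, c'.push P = c ∧ c'.obj (Fin.last n) = a := by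
  let t : ∀ i : Fin n, (b : {b : D // P.obj b = c.obj i.succ}) → Tgt D b.1 :=
    fun i b => (hP b.1 ⟨c.obj i.castSucc, c.map i ≫ eqToHom b.2.symm⟩).choose
  have ht : ∀ i b, tgtMap P b.1 (t i b) = ⟨c.obj i.castSucc, c.map i ≫ eqToHom b.2.symm⟩ :=
    fun i b => (hP b.1 _).choose_spec
  let ob : ∀ i : Fin (n + 1), {a : D // P.obj a = c.obj i} :=
    Fin.reverseInduction ⟨a, ha⟩ fun i b => ⟨(t i b).1, congrArg Sigma.fst (ht i b)⟩
  have hob : ∀ i : Fin n, (ob i.castSucc).1 = (t i (ob i.succ)).1 := fun i => by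
    simp only [ob, Fin.reverseInduction_castSucc]
  refine ⟨⟨fun i => (ob i).1, fun i => eqToHom (hob i) ≫ (t i (ob i.succ)).2⟩,
    ext' (fun i => (ob i).2) fun i => ?_, by simp only [ob, Fin.reverseInduction_last]⟩
  change HEq (P.map (eqToHom _ ≫ (t i (ob i.succ)).2)) (c.map i)
  rw [P.map_comp, eqToHom_map]
  exact ((eqToHom_comp_heq _ _).trans (Sigma.ext_iff.mp (ht i (ob i.succ))).2).trans
    (comp_eqToHom_heq _ _)

lemma Chain.eq_of_push_eq_of_tgtMap_injective (hP : ∀ x, Function.Injective (tgtMap P x))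
    {n : ℕ} {c₁ c₂ : Chain D n} (hp : c₁.push P = c₂.push P)
    (hl : c₁.obj (Fin.last n) = c₂.obj (Fin.last n)) : c₁ = c₂ := by
  have hpo : ∀ i, P.obj (c₁.obj i) = P.obj (c₂.obj i) := fun i =>
    congrFun (congrArg Chain.obj hp) i
  have hpm : ∀ i : Fin n, HEq (P.map (c₁.map i)) (P.map (c₂.map i)) := fun i =>
    congr_arg_heq (fun c => c.map i) hp
  have lift_eq : ∀ i : Fin n, c₁.obj i.succ = c₂.obj i.succ →
      c₁.obj i.castSucc = c₂.obj i.castSucc ∧ HEq (c₁.map i) (c₂.map i) := fun i hi =>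
    eq_and_heq_of_tgtMap_injective hP (c₁.map i) (c₂.map i) hi (hpo i.castSucc) (hpm i)
  have ho : ∀ i, c₁.obj i = c₂.obj i :=
    Fin.reverseInduction hl fun i ih => (lift_eq i ih).1
  exact ext' ho fun i => (lift_eq i (ho i.succ)).2

lemma Chain.card_push_eq_card_fiber_last (hP : ∀ x, Function.Bijective (tgtMap P x))
    {n : ℕ} (c : Chain C n) :
    Nat.card {c' : Chain D n // c'.push P = c} =
      Nat.card {b : D // P.obj b = c.obj (Fin.last n)} := by
  refine Nat.card_eq_of_bijective (fun c' => ⟨c'.1.obj (Fin.last n),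
    congrFun (congrArg Chain.obj c'.2) (Fin.last n)⟩) ⟨?_, ?_⟩
  · rintro ⟨c₁, h₁⟩ ⟨c₂, h₂⟩ hl
    exact Subtype.ext (eq_of_push_eq_of_tgtMap_injective (fun x => (hP x).1) (h₁.trans h₂.symm)
      (congrArg Subtype.val hl))
  · rintro ⟨b, hb⟩
    obtain ⟨c', hc', hl⟩ := exists_push_eq_of_tgtMap_surjective (fun x => (hP x).2) c b hb
    exact ⟨⟨c', hc'⟩, Subtype.ext hl⟩

end Lifting

section Fiber

variable {D C : Type u} [SmallCategory D] [SmallCategory C] {P : D ⥤ C} {e : D → ℕ}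

def srcLifts (P : D ⥤ C) {x y : C} (f : x ⟶ y) (a : {a : D // P.obj a = x}) : Type u :=
  {s : Src D a.1 // s ≠ ⟨a.1, 𝟙 a.1⟩ ∧ srcMap P a.1 s = ⟨y, eqToHom a.2 ≫ f⟩}

lemma eqToHom_comp_ne_id {x x' y : C} (hx : x' = x) {f : x ⟶ y}
    (hf : (⟨y, f⟩ : Src C x) ≠ ⟨x, 𝟙 x⟩) :
    (⟨y, eqToHom hx ≫ f⟩ : Src C x') ≠ ⟨x', 𝟙 x'⟩ := by
  subst hx
  simpa only [eqToHom_refl, Category.id_comp] using hf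

lemma card_sigma_srcLifts (h : IsRamifiedCovering P e) {d : ℕ} (hd : IsDFold P e d)
    {x y : C} (f : x ⟶ y) (hf : (⟨y, f⟩ : Src C x) ≠ ⟨x, 𝟙 x⟩) :
    Nat.card (Σ a, srcLifts P f a) = d := by
  have hcard : ∀ a, Nat.card (srcLifts P f a) = e a.1 := fun a =>
    h.src_count a.1 _ (eqToHom_comp_ne_id a.2 hf)
  have hfin : ∀ a, Finite (srcLifts P f a) := fun a =>
    Nat.finite_of_card_ne_zero ((hcard a).trans_ne (Nat.one_le_iff_ne_zero.mp (h.one_le a.1)))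
  rw [Nat.card_congr (Equiv.sigmaCongrRight fun a => (Finite.equivFinOfCardEq (hcard a))),
    hd x]

lemma bijective_srcLifts_target (hP : ∀ x, Function.Bijective (tgtMap P x))
    {x y : C} (f : x ⟶ y) (hf : (⟨y, f⟩ : Src C x) ≠ ⟨x, 𝟙 x⟩) :
    Function.Bijective fun q : Σ a, srcLifts P f a =>
      (⟨q.2.1.1, congrArg Sigma.fst q.2.2.2⟩ : {b : D // P.obj b = y}) := by
  constructor
  · rintro ⟨⟨a₁, ha₁⟩, ⟨⟨b₁, g₁⟩, _, hsm₁⟩⟩ ⟨⟨a₂, ha₂⟩, ⟨⟨b₂, g₂⟩, _, hsm₂⟩⟩ hq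
    have hb : b₁ = b₂ := congrArg Subtype.val hq
    rw [Sigma.ext_iff] at hsm₁ hsm₂
    obtain ⟨rfl, hg⟩ := eq_and_heq_of_tgtMap_injective (fun x => (hP x).1) g₁ g₂ hb
      (ha₁.trans ha₂.symm) ((hsm₁.2.trans (eqToHom_comp_heq _ _)).trans
        (hsm₂.2.trans (eqToHom_comp_heq _ _)).symm)
    subst hb
    obtain rfl : g₁ = g₂ := eq_of_heq hg
    rfl
  · rintro ⟨b, hb⟩
    obtain ⟨⟨a, g⟩, ht⟩ := (hP b).2 ⟨x, f ≫ eqToHom hb.symm⟩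
    obtain ⟨ha, hg⟩ : P.obj a = x ∧ HEq (P.map g) (f ≫ eqToHom hb.symm) := Sigma.ext_iff.mp ht
    have hsm : srcMap P a ⟨b, g⟩ = ⟨y, eqToHom ha ≫ f⟩ :=
      Sigma.ext hb ((hg.trans (comp_eqToHom_heq _ _)).trans (eqToHom_comp_heq _ _).symm)
    have hne : (⟨b, g⟩ : Src D a) ≠ ⟨a, 𝟙 a⟩ := by
      intro hid
      refine eqToHom_comp_ne_id ha hf ?_
      rw [← hsm, hid]
      simp [srcMap]
    exact ⟨⟨⟨a, ha⟩, ⟨⟨b, g⟩, hne, hsm⟩⟩, rfl⟩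

lemma card_fiber_eq_of_ne_id (h : IsRamifiedCovering P e) {d : ℕ} (hd : IsDFold P e d)
    {x y : C} (f : x ⟶ y) (hf : (⟨y, f⟩ : Src C x) ≠ ⟨x, 𝟙 x⟩) :
    Nat.card {b : D // P.obj b = y} = d :=
  (Nat.card_eq_of_bijective _ (bijective_srcLifts_target h.tgt_bij f hf)).symm.trans
    (card_sigma_srcLifts h hd f hf)

end Fiber

theorem ramifiedCovering_chain_lift_count_general {D C : Type u}
    [SmallCategory D] [SmallCategory C]
    (P : D ⥤ C) (e : D → ℕ) (d : ℕ)
    (h : IsRamifiedCovering P e) (hd : IsDFold P e d)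
    (n : ℕ) (c : Chain C n) (hc : ∀ x : C, c ≠ Chain.const C x n) :
    Nat.card {c' : Chain D n // c'.push P = c} = d := by
  obtain ⟨j, hj, hjl⟩ := c.exists_not_isIdAt_obj_succ_eq_last hc
  rw [Chain.card_push_eq_card_fiber_last h.tgt_bij, ← hjl]
  exact card_fiber_eq_of_ne_id h hd (c.map j) hj

/-- For a `d`-fold ramified covering of small categories and `n ≥ 1`,
every chain in `N_n(C)` which is not a constant identity chain has exactly `d`
preimages in `N_n(C̃)` under the map induced by `P`. -/
theorem ramifiedCovering_chain_lift_count {D C : Type u}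
    [SmallCategory D] [SmallCategory C]
    (P : D ⥤ C) (e : D → ℕ) (d : ℕ)
    (h : IsRamifiedCovering P e) (hd : IsDFold P e d)
    (n : ℕ) (hn : 1 ≤ n) (c : Chain C n) (hc : ∀ x : C, c ≠ Chain.const C x n) :
    Nat.card {c' : Chain D n // c'.push P = c} = d :=
  ramifiedCovering_chain_lift_count_general P e d h hd n c hc
end
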